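/- arXiv:math/0405013 — 8 statements merged into one kernel-verified Lean document; each statement's English description precedes it below -/
import Mathlib

section
/- Let μ < λ be infinite cardinals and let F be a fine filter on [λ]^μ. If X ⊆ [λ]^μ is F-positive and ν is a regular cardinal with μ < ν ≤ λ, then X can be split into ν pairwise disjoint F-positive sets. -/
set_option autoImplicit false

open Cardinal Set

def cardEQ (x : Set Ordinal.{0}) (c : Cardinal.{0}) : Prop :=
  Cardinal.mk ↥x = Cardinal.lift.{1, 0} c

/-- `[λ]^μ`: subsets of `{β | β < lam}` of size exactly `μ`. -/
def slm (μ lam : Cardinal.{0}) : Set (Set Ordinal.{0}) :=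
  {x | x ⊆ Set.Iio lam.ord ∧ cardEQ x μ}

/-- `F` is a (proper) fine filter on `[λ]^μ`: it is a `μ⁺`-complete filter on `[λ]^μ`
containing every set `{x : α ∈ x}` for `α < λ`. -/
def IsFineFilter (μ lam : Cardinal.{0}) (F : Set (Set (Set Ordinal.{0}))) : Prop :=
  (∀ Y ∈ F, Y ⊆ slm μ lam) ∧ slm μ lam ∈ F ∧ ∅ ∉ F ∧
  (∀ Y Z, Y ∈ F → Y ⊆ Z → Z ⊆ slm μ lam → Z ∈ F) ∧
  (∀ A : Ordinal.{0} → Set (Set Ordinal.{0}),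
      (∀ i < μ.ord, A i ∈ F) → (⋂ i ∈ Set.Iio μ.ord, A i) ∈ F) ∧
  (∀ α < lam.ord, {x ∈ slm μ lam | α ∈ x} ∈ F)

/-- `X` is `F`-positive: its complement (inside `[λ]^μ`) is not in `F`. -/
def IsPositive (μ lam : Cardinal.{0}) (F : Set (Set (Set Ordinal.{0})))
    (X : Set (Set Ordinal.{0})) : Prop :=
  X ⊆ slm μ lam ∧ (slm μ lam \ X) ∉ F

/-! Auxiliary lemmas -/

lemma mk_Iio_ord_aux (c : Cardinal.{0}) :
    Cardinal.mk ↥(Set.Iio c.ord) = Cardinal.lift.{1, 0} c := by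
  rw [Ordinal.mk_Iio_ordinal, Cardinal.card_ord]

lemma isRegular_lift_aux {ν : Cardinal.{0}} (h : ν.IsRegular) :
    (Cardinal.lift.{1, 0} ν).IsRegular := by
  constructor
  · exact Cardinal.aleph0_le_lift.mpr h.1
  · rw [← Cardinal.lift_ord, ← Ordinal.lift_cof]
    exact Cardinal.lift_le.mpr h.2

/-- A choice of injective coding of each `x` of size `μ` into `Iio μ.ord`. -/
lemma exists_code (μ : Cardinal.{0}) (x : Set Ordinal.{0}) :
    ∃ f : Ordinal.{0} → Ordinal.{0},
      cardEQ x μ → (∀ α ∈ x, f α < μ.ord) ∧ Set.InjOn f x := by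
  classical
  by_cases h : cardEQ x μ
  · have hxx : Cardinal.mk ↥x = Cardinal.mk ↥(Set.Iio μ.ord) := by
      rw [h, mk_Iio_ord_aux]
    obtain ⟨e⟩ := Cardinal.eq.mp hxx
    refine ⟨fun α => if hα : α ∈ x then (e ⟨α, hα⟩).1 else 0, fun _ => ⟨?_, ?_⟩⟩
    · intro α hα
      simp only [dif_pos hα]
      exact (e ⟨α, hα⟩).2
    · intro a ha b hb hab
      dsimp only at hab
      rw [dif_pos ha, dif_pos hb] at hab
      have : e ⟨a, ha⟩ = e ⟨b, hb⟩ := Subtype.ext hab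
      have := e.injective this
      exact congrArg Subtype.val this
  · exact ⟨fun _ => 0, fun h' => absurd h' h⟩

/-- If `F` is a fine filter on `[λ]^μ`, `X ⊆ [λ]^μ` is `F`-positive and `ν` is regular
with `μ < ν ≤ λ`, then `X` splits into `ν` pairwise disjoint `F`-positive sets. -/
theorem split_positive (μ lam ν : Cardinal.{0})
    (hμ : Cardinal.aleph0 ≤ μ) (hμlam : μ < lam)
    (F : Set (Set (Set Ordinal.{0}))) (hF : IsFineFilter μ lam F)
    (X : Set (Set Ordinal.{0})) (hX : IsPositive μ lam F X)
    (hν : ν.IsRegular) (hμν : μ < ν) (hνlam : ν ≤ lam) :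
    ∃ P : Ordinal.{0} → Set (Set Ordinal.{0}),
      (∀ i < ν.ord, IsPositive μ lam F (P i)) ∧
      (∀ i j, i < ν.ord → j < ν.ord → i ≠ j → Disjoint (P i) (P j)) ∧
      (⋃ i ∈ Set.Iio ν.ord, P i) = X := by
  classical
  obtain ⟨hsub, htop, hne, hup, hcomp, hfine⟩ := hF
  -- choose codings
  choose f hf using exists_code μ
  -- basic ordinal facts
  have h0μ : (0 : Ordinal) < μ.ord := by
    calc (0 : Ordinal) < Ordinal.omega0 := Ordinal.omega0_pos
    _ ≤ μ.ord := by rw [← Cardinal.ord_aleph0]; exact Cardinal.ord_le_ord.mpr hμ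
  have h1μ : (1 : Ordinal) < μ.ord := by
    calc (1 : Ordinal) < Ordinal.omega0 := Ordinal.one_lt_omega0
    _ ≤ μ.ord := by rw [← Cardinal.ord_aleph0]; exact Cardinal.ord_le_ord.mpr hμ
  have h0ν : (0 : Ordinal) < ν.ord := by
    calc (0 : Ordinal) < Ordinal.omega0 := Ordinal.omega0_pos
    _ ≤ ν.ord := by rw [← Cardinal.ord_aleph0]; exact Cardinal.ord_le_ord.mpr hν.1
  -- binary intersections
  have hinter2 : ∀ Y Z, Y ∈ F → Z ∈ F → Y ∩ Z ∈ F := by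
    intro Y Z hY hZ
    have hmem := hcomp (fun i => if i = 0 then Y else Z)
      (fun i _ => by by_cases h : i = 0 <;> simp [h, hY, hZ])
    have heq : (⋂ i ∈ Set.Iio μ.ord, (if i = 0 then Y else Z)) = Y ∩ Z := by
      ext x
      simp only [Set.mem_iInter, Set.mem_Iio, Set.mem_inter_iff]
      constructor
      · intro h
        refine ⟨by simpa using h 0 h0μ, by simpa using h 1 h1μ⟩
      · intro h i _
        by_cases hh : i = 0 <;> simp [hh, h.1, h.2]
    rwa [heq] at hmem
  -- positivity is upward closed below slm
  have hposmono : ∀ Y Z, IsPositive μ lam F Y → Y ⊆ Z → Z ⊆ slm μ lam →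
      IsPositive μ lam F Z := by
    intro Y Z hY hYZ hZ
    refine ⟨hZ, fun h => hY.2 ?_⟩
    exact hup _ _ h (Set.diff_subset_diff_right hYZ) Set.diff_subset
  -- the Ulam matrix
  set A : Ordinal.{0} → Ordinal.{0} → Set (Set Ordinal.{0}) :=
    fun ξ α => {x | x ∈ slm μ lam ∧ α ∈ x ∧ f x α = ξ} with hA
  have hAsub : ∀ ξ α, A ξ α ⊆ slm μ lam := fun ξ α x hx => hx.1
  -- every column contains a positive cell
  have hcol : ∀ α, α < ν.ord → ∃ ξ, ξ < μ.ord ∧ IsPositive μ lam F (X ∩ A ξ α) := by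
    intro α hα
    by_contra hcon
    push_neg at hcon
    have hB : ∀ ξ, ξ < μ.ord → slm μ lam \ (X ∩ A ξ α) ∈ F := by
      intro ξ hξ
      have h1 := hcon ξ hξ
      rw [IsPositive, not_and] at h1
      exact not_not.mp (h1 (Set.inter_subset_right.trans (hAsub ξ α)))
    have hbig := hcomp (fun ξ => slm μ lam \ (X ∩ A ξ α)) hB
    have hC : {x ∈ slm μ lam | α ∈ x} ∈ F :=
      hfine α (lt_of_lt_of_le hα (Cardinal.ord_le_ord.mpr hνlam))
    have hD := hinter2 _ _ hbig hC
    have hsubD : ((⋂ ξ ∈ Set.Iio μ.ord, slm μ lam \ (X ∩ A ξ α)) ∩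
        {x ∈ slm μ lam | α ∈ x}) ⊆ slm μ lam \ X := by
      rintro x ⟨hx1, hx2, hx3⟩
      have hcard : cardEQ x μ := hx2.2
      have hfx : f x α < μ.ord := (hf x hcard).1 α hx3
      have hx4 : x ∈ slm μ lam \ (X ∩ A (f x α) α) := by
        simp only [Set.mem_iInter, Set.mem_Iio] at hx1
        exact hx1 (f x α) hfx
      refine ⟨hx2, fun hxX => hx4.2 ⟨hxX, hx2, hx3, rfl⟩⟩
    exact hX.2 (hup _ _ hD hsubD Set.diff_subset)
  -- choose a row index for each column
  have hcol' : ∀ α, ∃ ξ, α < ν.ord → ξ < μ.ord ∧ IsPositive μ lam F (X ∩ A ξ α) := by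
    intro α
    by_cases hα : α < ν.ord
    · obtain ⟨ξ, h1, h2⟩ := hcol α hα
      exact ⟨ξ, fun _ => ⟨h1, h2⟩⟩
    · exact ⟨0, fun h => absurd h hα⟩
  choose ξsel hξsel using hcol'
  -- pigeonhole: some row is used ν-many times
  set T : ↥(Set.Iio ν.ord) → ↥(Set.Iio μ.ord) :=
    fun a => ⟨ξsel a.1, (hξsel a.1 a.2).1⟩ with hT
  have hcardν : Cardinal.mk ↥(Set.Iio ν.ord) = Cardinal.lift.{1, 0} ν := mk_Iio_ord_aux ν
  have hfiber : ∃ b, Cardinal.mk {a // T a = b} = Cardinal.lift.{1, 0} ν := by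
    by_contra hcon
    push_neg at hcon
    have hlt : ∀ b, Cardinal.mk {a // T a = b} < Cardinal.lift.{1, 0} ν := by
      intro b
      refine lt_of_le_of_ne ?_ (hcon b)
      rw [← hcardν]
      exact Cardinal.mk_subtype_le _
    have hsum : Cardinal.lift.{1, 0} ν = Cardinal.sum (fun b => Cardinal.mk {a // T a = b}) := by
      calc Cardinal.lift.{1, 0} ν = Cardinal.mk ↥(Set.Iio ν.ord) := hcardν.symm
      _ = Cardinal.mk (Σ b, {a // T a = b}) :=
        (Cardinal.mk_congr (Equiv.sigmaFiberEquiv T)).symm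
      _ = Cardinal.sum (fun b => Cardinal.mk {a // T a = b}) := Cardinal.mk_sigma _
    have hreg := isRegular_lift_aux hν
    have hι : Cardinal.lift.{0, 1} (Cardinal.mk ↥(Set.Iio μ.ord)) < Cardinal.lift.{1, 0} ν := by
      rw [Cardinal.lift_id'.{0,1}, mk_Iio_ord_aux]
      exact Cardinal.lift_lt.mpr hμν
    have := Cardinal.sum_lt_lift_of_isRegular hreg hι hlt
    rw [← hsum] at this
    exact lt_irrefl _ this
  obtain ⟨b, hb⟩ := hfiber
  have hEe : Cardinal.mk ↥(Set.Iio ν.ord) = Cardinal.mk {a // T a = b} := by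
    rw [hb, hcardν]
  obtain ⟨E⟩ := Cardinal.eq.mp hEe
  set ξstar : Ordinal.{0} := (b : ↥(Set.Iio μ.ord)).1 with hξstar
  set g : Ordinal.{0} → Ordinal.{0} :=
    fun i => if h : i < ν.ord then (((E ⟨i, h⟩) : {a // T a = b}).1).1 else 0 with hg
  have hg1 : ∀ i, i < ν.ord → g i < ν.ord := by
    intro i h
    simp only [hg, dif_pos h]
    exact ((E ⟨i, h⟩).1).2
  have hg2 : ∀ i, i < ν.ord → ξsel (g i) = ξstar := by
    intro i h
    have := (E ⟨i, h⟩).2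
    have := congrArg Subtype.val this
    simp only [hT] at this
    simp only [hg, dif_pos h]
    exact this
  have hg3 : ∀ i j, i < ν.ord → j < ν.ord → g i = g j → i = j := by
    intro i j hi hj hij
    simp only [hg, dif_pos hi, dif_pos hj] at hij
    have h1 : ((E ⟨i, hi⟩).1 : ↥(Set.Iio ν.ord)) = (E ⟨j, hj⟩).1 := Subtype.ext hij
    have h2 : E ⟨i, hi⟩ = E ⟨j, hj⟩ := Subtype.ext h1
    have h3 := E.injective h2
    exact congrArg Subtype.val h3
  -- the positive cells
  set Q : Ordinal.{0} → Set (Set Ordinal.{0}) := fun i => X ∩ A ξstar (g i) with hQ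
  have hQpos : ∀ i, i < ν.ord → IsPositive μ lam F (Q i) := by
    intro i h
    have := (hξsel (g i) (hg1 i h)).2
    rwa [hg2 i h] at this
  have hQdisj : ∀ i j, i < ν.ord → j < ν.ord → i ≠ j → ∀ x, x ∈ Q i → x ∈ Q j → False := by
    intro i j hi hj hij x hxi hxj
    have hslm : x ∈ slm μ lam := hxi.2.1
    have hcard : cardEQ x μ := hslm.2
    have hinj := (hf x hcard).2
    have h1 : g i ∈ x := hxi.2.2.1
    have h2 : g j ∈ x := hxj.2.2.1
    have h3 : f x (g i) = f x (g j) := by rw [hxi.2.2.2, hxj.2.2.2]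
    exact hij (hg3 i j hi hj (hinj h1 h2 h3))
  -- the partition
  set P : Ordinal.{0} → Set (Set Ordinal.{0}) :=
    fun i => if i = 0 then X \ (⋃ j ∈ Set.Iio ν.ord \ {0}, Q j) else Q i with hP
  have hQsubX : ∀ i, Q i ⊆ X := fun i => Set.inter_subset_left
  have hPsubX : ∀ i, i < ν.ord → P i ⊆ X := by
    intro i hi
    by_cases h : i = 0
    · simp only [hP, if_pos h]; exact Set.diff_subset
    · simp only [hP, if_neg h]; exact hQsubX i
  refine ⟨P, ?_, ?_, ?_⟩
  · -- positivity
    intro i hi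
    by_cases h : i = 0
    · subst h
      refine hposmono (Q 0) _ (hQpos 0 h0ν) ?_ ((hPsubX 0 h0ν).trans hX.1)
      intro x hx
      simp only [hP, if_pos rfl]
      refine ⟨hQsubX 0 hx, ?_⟩
      intro hmem
      simp only [Set.mem_iUnion] at hmem
      obtain ⟨j, ⟨hj1, hj2⟩, hxj⟩ := hmem
      have hj2' : j ≠ 0 := hj2
      exact hQdisj 0 j h0ν hj1 (fun e => hj2' e.symm) x hx hxj
    · simp only [hP, if_neg h]
      exact hQpos i hi
  · -- disjointness
    intro i j hi hj hij
    rw [Set.disjoint_left]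
    intro x hxi hxj
    by_cases h1 : i = 0
    · subst h1
      have h2 : j ≠ 0 := fun e => hij e.symm
      simp only [hP, if_pos rfl] at hxi
      simp only [hP, if_neg h2] at hxj
      refine hxi.2 ?_
      simp only [Set.mem_iUnion]
      exact ⟨j, ⟨hj, h2⟩, hxj⟩
    · by_cases h2 : j = 0
      · subst h2
        simp only [hP, if_pos rfl] at hxj
        simp only [hP, if_neg h1] at hxi
        refine hxj.2 ?_
        simp only [Set.mem_iUnion]
        exact ⟨i, ⟨hi, h1⟩, hxi⟩
      · simp only [hP, if_neg h1] at hxi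
        simp only [hP, if_neg h2] at hxj
        exact absurd (hQdisj i j hi hj hij x hxi hxj) (fun h => h)
  · -- union equals X
    ext x
    simp only [Set.mem_iUnion, Set.mem_Iio]
    constructor
    · rintro ⟨i, hi, hx⟩
      exact hPsubX i hi hx
    · intro hx
      by_cases hc : ∃ j, (j < ν.ord ∧ j ≠ 0) ∧ x ∈ Q j
      · obtain ⟨j, ⟨hj1, hj2⟩, hxj⟩ := hc
        refine ⟨j, hj1, ?_⟩
        simp only [hP, if_neg hj2]
        exact hxj
      · refine ⟨0, h0ν, ?_⟩
        simp only [hP, if_pos rfl]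
        refine ⟨hx, ?_⟩
        intro hmem
        simp only [Set.mem_iUnion] at hmem
        obtain ⟨j, ⟨hj1, hj2⟩, hxj⟩ := hmem
        exact hc ⟨j, ⟨hj1, hj2⟩, hxj⟩
end

section
/- Let μ < λ be infinite cardinals and F a fine filter on [λ]^μ. Then [λ]^μ can be partitioned into λ pairwise disjoint F-positive sets. -/
set_option autoImplicit false

open Cardinal Set

/-! ### Auxiliary lemmas -/

section Aux

variable (μ lam : Cardinal.{0}) (F : Set (Set (Set Ordinal.{0})))

lemma aux_zero_lt_ord (hμ : Cardinal.aleph0 ≤ μ) : (0 : Ordinal.{0}) < μ.ord := by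
  rw [Cardinal.lt_ord, Ordinal.card_zero]
  exact Cardinal.aleph0_pos.trans_le hμ

lemma aux_one_lt_ord (hμ : Cardinal.aleph0 ≤ μ) : (1 : Ordinal.{0}) < μ.ord := by
  rw [Cardinal.lt_ord, Ordinal.card_one]
  exact Cardinal.one_lt_aleph0.trans_le hμ

lemma aux_inter_mem (hμ : Cardinal.aleph0 ≤ μ) (hF : IsFineFilter μ lam F)
    {Y Z : Set (Set Ordinal.{0})} (hY : Y ∈ F) (hZ : Z ∈ F) : Y ∩ Z ∈ F := by
  classical
  set A : Ordinal.{0} → Set (Set Ordinal.{0}) := fun i => if i = 0 then Y else Z with hA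
  have hmem : (⋂ i ∈ Set.Iio μ.ord, A i) ∈ F := by
    refine hF.2.2.2.2.1 A ?_
    intro i _
    by_cases h : i = 0 <;> simp [hA, h, hY, hZ]
  refine hF.2.2.2.1 _ _ hmem ?_ (fun x hx => hF.1 Y hY hx.1)
  intro x hx
  simp only [Set.mem_iInter] at hx
  constructor
  · have := hx 0 (aux_zero_lt_ord μ hμ)
    simpa [hA] using this
  · have := hx 1 (aux_one_lt_ord μ hμ)
    simpa [hA] using this

lemma aux_null_biUnion (hμ : Cardinal.aleph0 ≤ μ) (hF : IsFineFilter μ lam F)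
    (N : Ordinal.{0} → Set (Set Ordinal.{0}))
    (h : ∀ i < μ.ord, slm μ lam \ N i ∈ F) :
    slm μ lam \ (⋃ i ∈ Set.Iio μ.ord, N i) ∈ F := by
  have hmem : (⋂ i ∈ Set.Iio μ.ord, (slm μ lam \ N i)) ∈ F :=
    hF.2.2.2.2.1 _ (fun i hi => h i hi)
  refine hF.2.2.2.1 _ _ hmem ?_ Set.diff_subset
  intro x hx
  simp only [Set.mem_iInter] at hx
  refine ⟨(hx 0 (aux_zero_lt_ord μ hμ)).1, ?_⟩
  intro hxU
  rw [Set.mem_iUnion₂] at hxU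
  obtain ⟨i, hi, hxi⟩ := hxU
  exact (hx i hi).2 hxi

lemma aux_pos_superset (hF : IsFineFilter μ lam F) {X Y : Set (Set Ordinal.{0})}
    (h : X ⊆ Y) (hY : Y ⊆ slm μ lam) (hX : IsPositive μ lam F X) :
    IsPositive μ lam F Y := by
  refine ⟨hY, fun hmem => hX.2 ?_⟩
  exact hF.2.2.2.1 _ _ hmem (fun x hx => ⟨hx.1, fun hxX => hx.2 (h hxX)⟩) Set.diff_subset

/-- Intersecting a positive set with a filter set yields a positive set. -/
lemma aux_pos_inter (hμ : Cardinal.aleph0 ≤ μ) (hF : IsFineFilter μ lam F)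
    {G Y : Set (Set Ordinal.{0})} (hG : IsPositive μ lam F G) (hY : Y ∈ F) :
    IsPositive μ lam F (G ∩ Y) := by
  refine ⟨Set.inter_subset_left.trans hG.1, fun hmem => hG.2 ?_⟩
  have h2 : (slm μ lam \ (G ∩ Y)) ∩ Y ∈ F := aux_inter_mem μ lam F hμ hF hmem hY
  refine hF.2.2.2.1 _ _ h2 ?_ Set.diff_subset
  rintro x ⟨⟨hxs, hxn⟩, hxY⟩
  exact ⟨hxs, fun hxG => hxn ⟨hxG, hxY⟩⟩

end Aux

lemma exists_enum (μ lam : Cardinal.{0}) (x : Set Ordinal.{0}) (hx : x ∈ slm μ lam) :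
    ∃ e : Ordinal.{0} → Ordinal.{0}, ∀ α ∈ x, ∃ ξ < μ.ord, e ξ = α := by
  classical
  have h1 : (#↥x) = Cardinal.lift.{1} μ := hx.2
  have h2 : #↥(Set.Iio μ.ord) = Cardinal.lift.{1} μ := by
    rw [Ordinal.mk_Iio_ordinal, Cardinal.card_ord]
  obtain ⟨φ⟩ : Nonempty (↥(Set.Iio μ.ord) ≃ ↥x) := Cardinal.eq.mp (h2.trans h1.symm)
  refine ⟨fun ξ => if h : ξ < μ.ord then (φ ⟨ξ, h⟩ : Ordinal.{0}) else 0, ?_⟩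
  intro α hα
  obtain ⟨t, ht⟩ : ∃ t : ↥(Set.Iio μ.ord), φ t = ⟨α, hα⟩ :=
    ⟨φ.symm _, Equiv.apply_symm_apply _ _⟩
  refine ⟨↑t, t.2, ?_⟩
  show (if h : (t : Ordinal.{0}) < μ.ord then (φ ⟨↑t, h⟩ : Ordinal.{0}) else 0) = α
  rw [dif_pos (show (t : Ordinal.{0}) < μ.ord from t.2)]
  rw [show (⟨↑t, t.2⟩ : ↥(Set.Iio μ.ord)) = t from Subtype.ext rfl, ht]

lemma exists_E (μ lam : Cardinal.{0}) :
    ∃ E : Set Ordinal.{0} → Ordinal.{0} → Ordinal.{0},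
      ∀ x ∈ slm μ lam, ∀ α ∈ x, ∃ ξ < μ.ord, E x ξ = α := by
  classical
  have h : ∀ x : Set Ordinal.{0}, ∃ e : Ordinal.{0} → Ordinal.{0},
      x ∈ slm μ lam → ∀ α ∈ x, ∃ ξ < μ.ord, e ξ = α := by
    intro x
    by_cases hx : x ∈ slm μ lam
    · obtain ⟨e, he⟩ := exists_enum μ lam x hx
      exact ⟨e, fun _ => he⟩
    · exact ⟨fun _ => 0, fun h => absurd h hx⟩
  choose E hEx using h
  exact ⟨E, fun x hx => hEx x hx⟩

/-- Key lemma: inside any positive set `G`, for any regular `θ` with `μ < θ ≤ λ`, there is a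
row `ξ < μ.ord` and a set `T` of `θ`-many columns such that all the corresponding matrix
entries intersected with `G` are positive. -/
lemma key (μ lam : Cardinal.{0}) (hμ : Cardinal.aleph0 ≤ μ)
    (F : Set (Set (Set Ordinal.{0}))) (hF : IsFineFilter μ lam F)
    (E : Set Ordinal.{0} → Ordinal.{0} → Ordinal.{0})
    (hE : ∀ x ∈ slm μ lam, ∀ α ∈ x, ∃ ξ < μ.ord, E x ξ = α)
    (G : Set (Set Ordinal.{0})) (hG : IsPositive μ lam F G)
    (θ : Cardinal.{0}) (hθ : θ.IsRegular) (hμθ : μ < θ) (hθlam : θ ≤ lam) :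
    ∃ ξ < μ.ord, ∃ T : Set Ordinal.{0},
      Cardinal.lift.{1} θ ≤ #↥T ∧
      ∀ α ∈ T, IsPositive μ lam F ({x ∈ slm μ lam | E x ξ = α} ∩ G) := by
  classical
  set C : Ordinal.{0} → Set Ordinal.{0} := fun ξ =>
    {α | IsPositive μ lam F ({x ∈ slm μ lam | E x ξ = α} ∩ G)} with hC
  -- covering claim
  have hcover : Set.Iio θ.ord ⊆ ⋃ ξ ∈ Set.Iio μ.ord, C ξ := by
    intro α hα
    by_contra hnot
    have hnot' : ∀ ξ < μ.ord, ¬ IsPositive μ lam F ({x ∈ slm μ lam | E x ξ = α} ∩ G) := by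
      intro ξ hξ hp
      exact hnot (Set.mem_biUnion hξ hp)
    have hnull : ∀ ξ < μ.ord,
        slm μ lam \ ({x ∈ slm μ lam | E x ξ = α} ∩ G) ∈ F := by
      intro ξ hξ
      by_contra hcon
      exact hnot' ξ hξ ⟨Set.inter_subset_left.trans (Set.sep_subset _ _), hcon⟩
    have hW : slm μ lam \ (⋃ ξ ∈ Set.Iio μ.ord, ({x ∈ slm μ lam | E x ξ = α} ∩ G)) ∈ F :=
      aux_null_biUnion μ lam F hμ hF _ hnull
    have halam : α < lam.ord := hα.trans_le (Cardinal.ord_le_ord.mpr hθlam)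
    have hfin : {x ∈ slm μ lam | α ∈ x} ∈ F := hF.2.2.2.2.2 α halam
    have hV : (slm μ lam \ (⋃ ξ ∈ Set.Iio μ.ord, ({x ∈ slm μ lam | E x ξ = α} ∩ G)))
        ∩ {x ∈ slm μ lam | α ∈ x} ∈ F := aux_inter_mem μ lam F hμ hF hW hfin
    refine hG.2 (hF.2.2.2.1 _ _ hV ?_ Set.diff_subset)
    rintro x ⟨⟨hxs, hxn⟩, -, hxα⟩
    refine ⟨hxs, fun hxG => ?_⟩
    obtain ⟨ξ, hξ, hEξ⟩ := hE x hxs α hxα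
    exact hxn (Set.mem_biUnion hξ ⟨⟨hxs, hEξ⟩, hxG⟩)
  -- pigeonhole
  by_contra hnone
  have hall : ∀ ξ : ↥(Set.Iio μ.ord), #↥(C ↑ξ) < Cardinal.lift.{1} θ := by
    intro ξ
    by_contra hge
    exact hnone ⟨↑ξ, ξ.2, C ↑ξ, not_lt.mp hge, fun α hα => hα⟩
  have hmkIio : #↥(Set.Iio μ.ord) = Cardinal.lift.{1} μ := by
    rw [Ordinal.mk_Iio_ordinal, Cardinal.card_ord]
  have hregθ : (Cardinal.lift.{1} θ).IsRegular := by
    constructor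
    · rw [← Cardinal.lift_aleph0.{1,0}]
      exact Cardinal.lift_le.mpr hθ.1
    · rw [← Cardinal.lift_ord, ← Ordinal.lift_cof]
      exact Cardinal.lift_le.mpr hθ.2
  have hμθ' : Cardinal.lift.{1} μ < Cardinal.lift.{1} θ := Cardinal.lift_lt.mpr hμθ
  have h1 : Cardinal.lift.{1} θ ≤ #↥(⋃ ξ ∈ Set.Iio μ.ord, C ξ) := by
    have := Ordinal.mk_Iio_ordinal θ.ord
    rw [Cardinal.card_ord] at this
    rw [← this]
    exact Cardinal.mk_le_mk_of_subset hcover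
  rw [Set.biUnion_eq_iUnion] at h1
  have h2 : #↥(⋃ ξ : ↥(Set.Iio μ.ord), C ↑ξ)
      ≤ #↥(Set.Iio μ.ord) * ⨆ ξ : ↥(Set.Iio μ.ord), #↥(C ↑ξ) :=
    Cardinal.mk_iUnion_le _
  have hsup : (⨆ ξ : ↥(Set.Iio μ.ord), #↥(C ↑ξ)) < Cardinal.lift.{1} θ :=
    Cardinal.iSup_lt_of_isRegular hregθ (by rw [hmkIio]; exact hμθ') hall
  have h3 : #↥(Set.Iio μ.ord) * (⨆ ξ : ↥(Set.Iio μ.ord), #↥(C ↑ξ))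
      < Cardinal.lift.{1} θ := by
    rw [hmkIio]
    exact Cardinal.mul_lt_of_lt hregθ.1 hμθ' hsup
  exact absurd ((h1.trans h2).trans_lt h3) (lt_irrefl _)

/-- Assembling a partition from a `λ`-indexed pairwise disjoint family of positive sets. -/
lemma assemble (μ lam : Cardinal.{0}) (hμ : Cardinal.aleph0 ≤ μ) (hμlam : μ < lam)
    (F : Set (Set (Set Ordinal.{0}))) (hF : IsFineFilter μ lam F)
    (B : ↥(Set.Iio lam.ord) → Set (Set Ordinal.{0}))
    (hpos : ∀ i, IsPositive μ lam F (B i))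
    (hdis : ∀ i j, i ≠ j → Disjoint (B i) (B j)) :
    ∃ P : Ordinal.{0} → Set (Set Ordinal.{0}),
      (∀ i < lam.ord, IsPositive μ lam F (P i)) ∧
      (∀ i j, i < lam.ord → j < lam.ord → i ≠ j → Disjoint (P i) (P j)) ∧
      (⋃ i ∈ Set.Iio lam.ord, P i) = slm μ lam := by
  classical
  have h0l : (0 : Ordinal.{0}) < lam.ord := by
    rw [Cardinal.lt_ord, Ordinal.card_zero]
    exact Cardinal.aleph0_pos.trans_le (hμ.trans hμlam.le)
  set U : Set (Set Ordinal.{0}) := ⋃ i, B i with hU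
  set R : Set (Set Ordinal.{0}) := slm μ lam \ U with hR
  have hRB : ∀ i, Disjoint R (B i) := by
    intro i
    rw [Set.disjoint_left]
    intro a ha hb
    exact ha.2 (Set.mem_iUnion.mpr ⟨i, hb⟩)
  set Q : Ordinal.{0} → Set (Set Ordinal.{0}) := fun i =>
    if h : i ∈ Set.Iio lam.ord then
      (if i = 0 then B ⟨i, h⟩ ∪ R else B ⟨i, h⟩) else ∅ with hQ
  have hQval : ∀ i (h : i ∈ Set.Iio lam.ord),
      Q i = if i = 0 then B ⟨i, h⟩ ∪ R else B ⟨i, h⟩ := fun i h => dif_pos h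
  refine ⟨Q, ?_, ?_, ?_⟩
  · intro i hi
    rw [hQval i hi]
    split_ifs with h0
    · refine aux_pos_superset μ lam F hF Set.subset_union_left ?_ (hpos _)
      exact Set.union_subset (hpos _).1 Set.diff_subset
    · exact hpos _
  · intro i j hi hj hij
    have hne : (⟨i, hi⟩ : ↥(Set.Iio lam.ord)) ≠ ⟨j, hj⟩ :=
      fun h => hij (congrArg Subtype.val h)
    rw [hQval i hi, hQval j hj]
    split_ifs with h0 h1 h1
    · exact absurd (h0.trans h1.symm) hij
    · exact Set.disjoint_union_left.mpr ⟨hdis _ _ hne, hRB _⟩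
    · exact Set.disjoint_union_right.mpr ⟨hdis _ _ hne, (hRB _).symm⟩
    · exact hdis _ _ hne
  · ext x
    simp only [Set.mem_iUnion₂]
    constructor
    · rintro ⟨i, hi, hx⟩
      rw [hQval i hi] at hx
      split_ifs at hx with h0
      · rcases hx with hx | hx
        · exact (hpos _).1 hx
        · exact hx.1
      · exact (hpos _).1 hx
    · intro hx
      by_cases hxU : x ∈ U
      · obtain ⟨i, hxi⟩ := Set.mem_iUnion.mp hxU
        refine ⟨↑i, i.2, ?_⟩
        rw [hQval ↑i i.2]
        have : (⟨↑i, i.2⟩ : ↥(Set.Iio lam.ord)) = i := Subtype.ext rfl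
        split_ifs with h0
        · exact Or.inl (by rw [this]; exact hxi)
        · rw [this]; exact hxi
      · refine ⟨0, h0l, ?_⟩
        rw [hQval 0 (Set.mem_Iio.mpr h0l), if_pos rfl]
        exact Or.inr ⟨hx, hxU⟩

/-- If `F` is a fine filter on `[λ]^μ`, then `[λ]^μ` can be partitioned into `λ`
pairwise disjoint `F`-positive sets. -/
theorem partition_positive (μ lam : Cardinal.{0})
    (hμ : Cardinal.aleph0 ≤ μ) (hμlam : μ < lam)
    (F : Set (Set (Set Ordinal.{0}))) (hF : IsFineFilter μ lam F) :
    ∃ P : Ordinal.{0} → Set (Set Ordinal.{0}),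
      (∀ i < lam.ord, IsPositive μ lam F (P i)) ∧
      (∀ i j, i < lam.ord → j < lam.ord → i ≠ j → Disjoint (P i) (P j)) ∧
      (⋃ i ∈ Set.Iio lam.ord, P i) = slm μ lam := by
  classical
  obtain ⟨E, hE⟩ := exists_E μ lam
  have hslm_pos : IsPositive μ lam F (slm μ lam) := by
    refine ⟨subset_rfl, ?_⟩
    rw [Set.diff_self]
    exact hF.2.2.1
  suffices hB : ∃ B : ↥(Set.Iio lam.ord) → Set (Set Ordinal.{0}),
      (∀ i, IsPositive μ lam F (B i)) ∧ (∀ i j, i ≠ j → Disjoint (B i) (B j)) by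
    obtain ⟨B, h1, h2⟩ := hB
    exact assemble μ lam hμ hμlam F hF B h1 h2
  have hlam0 : Cardinal.aleph0 ≤ lam := hμ.trans hμlam.le
  by_cases hreg : lam ≤ lam.ord.cof
  · -- regular case
    have hR : lam.IsRegular := ⟨hlam0, hreg⟩
    obtain ⟨ξ₀, hξ₀, T₀, hT₀card, hT₀pos⟩ :=
      key μ lam hμ F hF E hE _ hslm_pos lam hR hμlam le_rfl
    have hmk : #↥(Set.Iio lam.ord) ≤ #↥T₀ := by
      rw [Ordinal.mk_Iio_ordinal, Cardinal.card_ord]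
      exact hT₀card
    obtain ⟨j⟩ := (Cardinal.le_def _ _).mp hmk
    refine ⟨fun i => {x ∈ slm μ lam | E x ξ₀ = ↑(j i)} ∩ slm μ lam,
      fun i => hT₀pos _ (j i).2, ?_⟩
    intro i i' hne
    have hneα : (↑(j i) : Ordinal.{0}) ≠ ↑(j i') :=
      fun h => hne (j.injective (Subtype.ext h))
    rw [Set.disjoint_left]
    rintro x ⟨⟨-, hx1⟩, -⟩ ⟨⟨-, hx2⟩, -⟩
    exact hneα (hx1.symm.trans hx2)
  · -- singular case
    have hcof_lt : lam.ord.cof < lam := not_le.mp hreg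
    set θ₀ : Cardinal.{0} := Order.succ (lam.ord.cof ⊔ μ) with hθ₀
    have hθ₀reg : θ₀.IsRegular := Cardinal.isRegular_succ (hμ.trans le_sup_right)
    have hμθ₀ : μ < θ₀ := le_sup_right.trans_lt (Order.lt_succ _)
    have hθ₀lam : θ₀ ≤ lam := Order.succ_le_of_lt (sup_lt_iff.mpr ⟨hcof_lt, hμlam⟩)
    obtain ⟨ξ₀, hξ₀, T₀, hT₀card, hT₀pos⟩ :=
      key μ lam hμ F hF E hE _ hslm_pos θ₀ hθ₀reg hμθ₀ hθ₀lam
    obtain ⟨ι, f, hlsub, hι⟩ := Ordinal.exists_lsub_cof lam.ord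
    have hcard : #(ULift.{1,0} ι) ≤ #↥T₀ := by
      rw [Cardinal.mk_uLift, hι]
      exact le_trans (le_of_lt (Cardinal.lift_lt.mpr
        (le_sup_left.trans_lt (Order.lt_succ _)))) hT₀card
    obtain ⟨g⟩ := (Cardinal.le_def _ _).mp hcard
    set Gp : ι → Set (Set Ordinal.{0}) :=
      fun i => {x ∈ slm μ lam | E x ξ₀ = ↑(g ⟨i⟩)} ∩ slm μ lam with hGp
    have hGpos : ∀ i, IsPositive μ lam F (Gp i) := fun i => hT₀pos _ (g ⟨i⟩).2
    have hGdis : ∀ i i', i ≠ i' → Disjoint (Gp i) (Gp i') := by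
      intro i i' hne
      have hneα : (↑(g ⟨i⟩) : Ordinal.{0}) ≠ ↑(g ⟨i'⟩) := by
        intro h
        exact hne (congrArg ULift.down (g.injective (Subtype.ext h)))
      rw [Set.disjoint_left]
      rintro x ⟨⟨-, hx1⟩, -⟩ ⟨⟨-, hx2⟩, -⟩
      exact hneα (hx1.symm.trans hx2)
    have hkey2 : ∀ i : ι, ∃ ξ, ξ < μ.ord ∧ ∃ T : Set Ordinal.{0},
        Cardinal.lift.{1} (Order.succ ((f i).card ⊔ μ)) ≤ #↥T ∧
        ∀ α ∈ T, IsPositive μ lam F ({x ∈ slm μ lam | E x ξ = α} ∩ Gp i) := by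
      intro i
      have hfi : f i < lam.ord := by
        rw [← hlsub]
        exact Ordinal.lt_lsub f i
      have hficard : (f i).card < lam := Cardinal.lt_ord.mp hfi
      obtain ⟨ξ, hξ, T, hT⟩ := key μ lam hμ F hF E hE _ (hGpos i)
        (Order.succ ((f i).card ⊔ μ))
        (Cardinal.isRegular_succ (hμ.trans le_sup_right))
        (le_sup_right.trans_lt (Order.lt_succ _))
        (Order.succ_le_of_lt (sup_lt_iff.mpr ⟨hficard, hμlam⟩))
      exact ⟨ξ, hξ, T, hT⟩
    choose ξs hξs Ts hTscard hTspos using hkey2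
    -- lower bound on the size of the sigma type
    have hIlb : ∀ κ : Cardinal.{0}, κ < lam →
        Cardinal.lift.{1} κ < #((i : ι) × ↥(Ts i)) := by
      intro κ hκ
      have hex : ∃ i, κ.ord ≤ f i := by
        by_contra h
        push_neg at h
        have := Ordinal.lsub_le (fun i => h i)
        rw [hlsub] at this
        exact absurd this (not_le.mpr (Cardinal.ord_lt_ord.mpr hκ))
      obtain ⟨i, hi⟩ := hex
      have h1 : κ < Order.succ ((f i).card ⊔ μ) :=
        lt_of_le_of_lt (le_trans (Cardinal.ord_le.mp hi) le_sup_left) (Order.lt_succ _)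
      calc Cardinal.lift.{1} κ < Cardinal.lift.{1} (Order.succ ((f i).card ⊔ μ)) :=
            Cardinal.lift_lt.mpr h1
        _ ≤ #↥(Ts i) := hTscard i
        _ ≤ #((i : ι) × ↥(Ts i)) := by
            rw [Cardinal.mk_sigma]
            exact Cardinal.le_sum _ i
    have hIlam : Cardinal.lift.{1} lam ≤ #((i : ι) × ↥(Ts i)) := by
      by_contra h
      obtain ⟨κ, hκ, hκ2⟩ := Cardinal.lt_lift_iff.mp (not_le.mp h)
      exact absurd (hκ2 ▸ hIlb κ hκ) (lt_irrefl _)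
    have hmk2 : #↥(Set.Iio lam.ord) ≤ #((i : ι) × ↥(Ts i)) := by
      rw [Ordinal.mk_Iio_ordinal, Cardinal.card_ord]
      exact hIlam
    obtain ⟨jj⟩ := (Cardinal.le_def _ _).mp hmk2
    have hpiecedis : ∀ p q : (i : ι) × ↥(Ts i), p ≠ q →
        Disjoint ({x ∈ slm μ lam | E x (ξs p.1) = ↑p.2} ∩ Gp p.1)
          ({x ∈ slm μ lam | E x (ξs q.1) = ↑q.2} ∩ Gp q.1) := by
      rintro ⟨i1, α1⟩ ⟨i2, α2⟩ hne
      by_cases h12 : i1 = i2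
      · subst h12
        have hαne : α1 ≠ α2 := fun h => hne (by rw [h])
        have hval : (↑α1 : Ordinal.{0}) ≠ ↑α2 := fun h => hαne (Subtype.ext h)
        rw [Set.disjoint_left]
        rintro x ⟨⟨-, h1⟩, -⟩ ⟨⟨-, h2⟩, -⟩
        exact hval (h1.symm.trans h2)
      · exact (hGdis i1 i2 h12).mono Set.inter_subset_right Set.inter_subset_right
    refine ⟨fun i => {x ∈ slm μ lam | E x (ξs (jj i).1) = ↑(jj i).2} ∩ Gp (jj i).1,
      fun i => hTspos (jj i).1 _ (jj i).2.2, ?_⟩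
    intro i i' hne
    exact hpiecedis _ _ (fun h => hne (jj.injective h))
end

section
/- Let κ be regular uncountable and κ ≤ μ < λ. If stationary reflection holds for P_κ λ, then stationary reflection holds for P_κ μ. Consequently, stationary reflection for P_κ λ fails at every λ ≥ κ⁺ if and only if it fails at λ = κ⁺. -/
set_option autoImplicit false

open Cardinal Set

/-- `x` has cardinality `< c`. -/
def cardLT (x : Set Ordinal.{0}) (c : Cardinal.{0}) : Prop :=
  Cardinal.mk ↥x < Cardinal.lift.{1, 0} c

/-- `x` has cardinality `≤ c`. -/
def cardLE (x : Set Ordinal.{0}) (c : Cardinal.{0}) : Prop :=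
  Cardinal.mk ↥x ≤ Cardinal.lift.{1, 0} c

/-- `P_κ Λ`: subsets of `{β | β < Λ}` of size `< κ`. -/
def pkl (κ : Cardinal.{0}) (Λ : Ordinal.{0}) : Set (Set Ordinal.{0}) :=
  {x | x ⊆ Set.Iio Λ ∧ cardLT x κ}

/-- `C` is club in the ground family `X`: cofinal in `(X, ⊆)` and closed under
unions of `⊆`-increasing chains of length `< κ`. -/
def IsClubP (κ : Cardinal.{0}) (X C : Set (Set Ordinal.{0})) : Prop :=
  C ⊆ X ∧ (∀ x ∈ X, ∃ c ∈ C, x ⊆ c) ∧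
  ∀ (δ : Ordinal.{0}) (f : Ordinal.{0} → Set Ordinal.{0}),
    δ ≠ 0 → δ < κ.ord →
    (∀ i j, i ≤ j → j < δ → f i ⊆ f j) →
    (∀ i < δ, f i ∈ C) →
    (⋃ i ∈ Set.Iio δ, f i) ∈ C

/-- `S` is stationary in the ground family `X`: `S ⊆ X` and `S` meets every club. -/
def IsStatP (κ : Cardinal.{0}) (X S : Set (Set Ordinal.{0})) : Prop :=
  S ⊆ X ∧ ∀ C, IsClubP κ X C → (S ∩ C).Nonempty

/-- `C` is closed unbounded in the ordinal `κ`. -/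
def IsClubIn (C : Set Ordinal.{0}) (κ : Ordinal.{0}) : Prop :=
  C ⊆ Set.Iio κ ∧ (∀ α < κ, ∃ β ∈ C, α ≤ β) ∧
  ∀ δ, δ ≠ 0 → δ < κ → (∀ α < δ, ∃ β ∈ C, α < β ∧ β < δ) → δ ∈ C

/-- `S` is stationary in the ordinal `κ`. -/
def IsStatIn (S : Set Ordinal.{0}) (κ : Ordinal.{0}) : Prop :=
  S ⊆ Set.Iio κ ∧ ∀ C, IsClubIn C κ → (S ∩ C).Nonempty

/-- `C(f)`: the members of `P_κ Λ` closed under `f`. -/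
def clubC (κ : Cardinal.{0}) (Λ : Ordinal.{0}) (f : Finset Ordinal.{0} → Set Ordinal.{0}) :
    Set (Set Ordinal.{0}) :=
  {x | x ∈ pkl κ Λ ∧ ∀ a : Finset Ordinal.{0}, ↑a ⊆ x → f a ⊆ x}

/-- Stationary reflection for `P_κ λ`: every stationary `S ⊆ P_κ λ` reflects to
`P_κ A` for some `A` with `κ ⊆ A ⊆ λ` of size `κ`. -/
def StatReflect (κ lam : Cardinal.{0}) : Prop :=
  ∀ S, IsStatP κ (pkl κ lam.ord) S →
    ∃ A : Set Ordinal.{0}, Set.Iio κ.ord ⊆ A ∧ A ⊆ Set.Iio lam.ord ∧ cardEQ A κ ∧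
      IsStatP κ {x | x ⊆ A ∧ cardLT x κ} (S ∩ {x | x ⊆ A})

/-!
A stationary `S ⊆ P_κ μ` lifts to `{x ∈ P_κ λ | x ∩ μ ∈ S}`. This set is stationary by Menas'
argument: for every club `C ⊆ P_κ λ` there is a monotone `f : [λ]^{<ω} → C` with
`f "[y]^{<ω} ∈ C` for all `y ∈ P_κ λ`, and every `y` in the club of sets in `P_κ μ` closed under
`a ↦ f a ∩ μ` equals `f "[y]^{<ω} ∩ μ`. If the lifted set reflects to `A`, projecting along
`x ↦ x ∩ μ`, which carries stationary subsets of `P_κ A` to stationary subsets of `P_κ (A ∩ μ)`,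
shows that `S` reflects to `A ∩ μ`. The second claim is monotonicity at `μ = κ⁺`.
-/

/-- `P_κ A`, so that `pkl κ Λ = pk κ (Iio Λ)` definitionally. -/
def pk (κ : Cardinal.{0}) (A : Set Ordinal.{0}) : Set (Set Ordinal.{0}) :=
  {x | x ⊆ A ∧ cardLT x κ}

/-- `f "[y]^{<ω}`; a set `y` is closed under `f` iff `imageFinsets f y ⊆ y`. -/
def imageFinsets (f : Finset Ordinal.{0} → Set Ordinal.{0}) (y : Set Ordinal.{0}) :
    Set Ordinal.{0} :=
  ⋃ (a : Finset Ordinal.{0}) (_ : ↑a ⊆ y), f a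

section Cardinality

variable {κ : Cardinal.{0}}

theorem cardLT_mono {x y : Set Ordinal.{0}} (h : x ⊆ y) (hy : cardLT y κ) : cardLT x κ :=
  (mk_le_mk_of_subset h).trans_lt hy

theorem cardLT_of_finite (hκ : ℵ₀ ≤ κ) {x : Set Ordinal.{0}} (hx : x.Finite) : cardLT x κ :=
  hx.lt_aleph0.trans_le (aleph0_le_lift.2 hκ)

theorem cardLT_union (hκ : ℵ₀ ≤ κ) {x y : Set Ordinal.{0}} (hx : cardLT x κ)
    (hy : cardLT y κ) : cardLT (x ∪ y) κ :=
  (mk_union_le x y).trans_lt (add_lt_of_lt (aleph0_le_lift.2 hκ) hx hy)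

theorem cardLT_iUnion (hκ : κ.IsRegular) {ι : Type 1} (hι : #ι < lift.{1} κ)
    {F : ι → Set Ordinal.{0}} (hF : ∀ i, cardLT (F i) κ) : cardLT (⋃ i, F i) κ :=
  (card_iUnion_lt_iff_forall_of_isRegular hκ.lift hι).2 hF

theorem cardLT_iUnion_nat (hκ : κ.IsRegular) (hκu : ℵ₀ < κ) {F : ℕ → Set Ordinal.{0}}
    (hF : ∀ n, cardLT (F n) κ) : cardLT (⋃ n, F n) κ := by
  rw [← Equiv.ulift.{1}.surjective.iUnion_comp F]
  refine cardLT_iUnion hκ ?_ fun n => hF n.down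
  simpa using hκu

theorem cardLT_biUnion_Iio (hκ : κ.IsRegular) {δ : Ordinal.{0}} (hδ : δ < κ.ord)
    {F : Ordinal.{0} → Set Ordinal.{0}} (hF : ∀ i < δ, cardLT (F i) κ) :
    cardLT (⋃ i ∈ Iio δ, F i) κ := by
  rw [biUnion_eq_iUnion]
  refine cardLT_iUnion hκ ?_ fun i => hF i i.2
  rw [mk_Iio_ordinal]
  exact lift_lt.2 (lt_ord.1 hδ)

theorem mk_finsets_subset_lt (hκ : ℵ₀ ≤ κ) {y : Set Ordinal.{0}} (hy : cardLT y κ) :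
    #{a : Finset Ordinal.{0} // ↑a ⊆ y} < lift.{1} κ := by
  classical
  have hsurj : Function.Surjective fun b : Finset y =>
      (⟨b.map (Function.Embedding.subtype _), by simp⟩ : {a : Finset Ordinal.{0} // ↑a ⊆ y}) :=
    fun a => ⟨a.1.subtype (· ∈ y), Subtype.ext (Finset.subtype_map_of_mem fun _ h => a.2 h)⟩
  refine (mk_le_of_surjective hsurj).trans_lt ?_
  rcases finite_or_infinite y with hfin | hinf
  · exact (lt_aleph0_of_finite _).trans_le (aleph0_le_lift.2 hκ)
  · rwa [mk_finset_of_infinite]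

end Cardinality

section ImageFinsets

variable {f : Finset Ordinal.{0} → Set Ordinal.{0}}

theorem mem_imageFinsets {y : Set Ordinal.{0}} {α : Ordinal.{0}} :
    α ∈ imageFinsets f y ↔ ∃ a : Finset Ordinal.{0}, ↑a ⊆ y ∧ α ∈ f a := by
  simp [imageFinsets]

theorem imageFinsets_mono {y z : Set Ordinal.{0}} (h : y ⊆ z) :
    imageFinsets f y ⊆ imageFinsets f z := fun _ hα =>
  let ⟨a, ha, hαa⟩ := mem_imageFinsets.1 hα
  mem_imageFinsets.2 ⟨a, ha.trans h, hαa⟩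

theorem imageFinsets_coe (hf : Monotone f) (s : Finset Ordinal.{0}) :
    imageFinsets f ↑s = f s := by
  refine Subset.antisymm (fun α hα => ?_) fun α hα => mem_imageFinsets.2 ⟨s, subset_rfl, hα⟩
  obtain ⟨a, ha, hαa⟩ := mem_imageFinsets.1 hα
  exact hf (Finset.coe_subset.1 ha) hαa

theorem subset_imageFinsets {y : Set Ordinal.{0}} (h : ∀ α ∈ y, α ∈ f {α}) :
    y ⊆ imageFinsets f y :=
  fun α hα => mem_imageFinsets.2 ⟨{α}, by simpa using hα, h α hα⟩

theorem imageFinsets_inter (B y : Set Ordinal.{0}) :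
    imageFinsets (fun a => f a ∩ B) y = imageFinsets f y ∩ B :=
  (iUnion₂_inter _ _).symm

theorem imageFinsets_iUnion {ι : Type*} [Nonempty ι] {Y : ι → Set Ordinal.{0}}
    (hY : Directed (· ⊆ ·) Y) : imageFinsets f (⋃ i, Y i) = ⋃ i, imageFinsets f (Y i) := by
  ext α
  simp only [mem_imageFinsets, mem_iUnion]
  constructor
  · rintro ⟨a, ha, hα⟩
    obtain ⟨i, hi⟩ := hY.exists_mem_subset_of_finset_subset_biUnion ha
    exact ⟨i, a, hi, hα⟩
  · rintro ⟨i, a, ha, hα⟩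
    exact ⟨a, ha.trans (subset_iUnion Y i), hα⟩

theorem imageFinsets_biUnion_Iio {δ : Ordinal.{0}} (hδ : δ ≠ 0)
    {g : Ordinal.{0} → Set Ordinal.{0}} (hg : ∀ i j, i ≤ j → j < δ → g i ⊆ g j) :
    imageFinsets f (⋃ i ∈ Iio δ, g i) = ⋃ i ∈ Iio δ, imageFinsets f (g i) := by
  have : Nonempty (Iio δ) := ⟨⟨0, pos_iff_ne_zero.2 hδ⟩⟩
  simp only [biUnion_eq_iUnion]
  refine imageFinsets_iUnion fun i j => ?_
  rcases le_total i j with h | h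
  · exact ⟨j, hg i j h j.2, subset_rfl⟩
  · exact ⟨i, subset_rfl, hg j i h i.2⟩

variable {κ : Cardinal.{0}}

theorem cardLT_imageFinsets (hκ : κ.IsRegular) {y : Set Ordinal.{0}} (hy : cardLT y κ)
    (hf : ∀ a, cardLT (f a) κ) : cardLT (imageFinsets f y) κ := by
  have h : imageFinsets f y = ⋃ a : {a : Finset Ordinal.{0} // ↑a ⊆ y}, f a.1 :=
    by simp only [imageFinsets, iUnion_subtype]
  rw [h]
  exact cardLT_iUnion hκ (mk_finsets_subset_lt hκ.aleph0_le hy) fun a => hf a.1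

end ImageFinsets

section Club

variable {κ : Cardinal.{0}}

/-- `c` is meant to choose, for each `x ∈ P_κ A`, a member of the club containing `x`. -/
noncomputable def monotoneSelector (c : Set Ordinal.{0} → Set Ordinal.{0}) (A : Set Ordinal.{0})
    (a : Finset Ordinal.{0}) : Set Ordinal.{0} :=
  c (↑a ∩ A ∪ ⋃ (b : Finset Ordinal.{0}) (_ : b ⊂ a), monotoneSelector c A b)
termination_by a.card
decreasing_by exact Finset.card_lt_card ‹_›

theorem monotoneSelector_spec (hκ : κ.IsRegular) {A : Set Ordinal.{0}}
    {C : Set (Set Ordinal.{0})} (hCA : C ⊆ pk κ A) {c : Set Ordinal.{0} → Set Ordinal.{0}}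
    (hcC : ∀ x, c x ∈ C) (hcsub : ∀ x ∈ pk κ A, x ⊆ c x) :
    Monotone (monotoneSelector c A) ∧ (∀ a, monotoneSelector c A a ∈ C) ∧
      ∀ a : Finset Ordinal.{0}, ↑a ∩ A ⊆ monotoneSelector c A a := by
  set f := monotoneSelector c A with hfdef
  have hf : ∀ a, f a = c (↑a ∩ A ∪ ⋃ (b : Finset Ordinal.{0}) (_ : b ⊂ a), f b) := fun a => by
    rw [hfdef, monotoneSelector]
  have hfC : ∀ a, f a ∈ C := fun a => hf a ▸ hcC _
  have harg : ∀ a : Finset Ordinal.{0},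
      ↑a ∩ A ∪ ⋃ (b : Finset Ordinal.{0}) (_ : b ⊂ a), f b ∈ pk κ A := fun a => by
    have hfin : {b | b ⊂ a}.Finite :=
      a.powerset.finite_toSet.subset fun b hb => Finset.mem_powerset.2 hb.subset
    have hunion :
        (⋃ (b : Finset Ordinal.{0}) (_ : b ⊂ a), f b) = ⋃ b : {b // b ⊂ a}, f b.1 := by
      simp only [iUnion_subtype]
    refine ⟨union_subset inter_subset_right (iUnion₂_subset fun b _ => (hCA (hfC b)).1), ?_⟩
    refine cardLT_union hκ.aleph0_le
      (cardLT_of_finite hκ.aleph0_le (a.finite_toSet.inter_of_left A)) ?_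
    rw [hunion]
    exact cardLT_iUnion hκ (hfin.lt_aleph0.trans_le (aleph0_le_lift.2 hκ.aleph0_le))
      fun b => (hCA (hfC b.1)).2
  have hle : ∀ a, ↑a ∩ A ∪ ⋃ (b : Finset Ordinal.{0}) (_ : b ⊂ a), f b ⊆ f a :=
    fun a => hf a ▸ hcsub _ (harg a)
  refine ⟨fun b a hba => ?_, hfC, fun a => subset_union_left.trans (hle a)⟩
  rcases eq_or_ssubset_of_subset hba with rfl | hlt
  · exact subset_rfl
  · exact (subset_iUnion₂ (s := fun b (_ : b ⊂ a) => f b) b hlt).trans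
      (subset_union_right.trans (hle a))

theorem exists_monotone_selector (hκ : κ.IsRegular) {A : Set Ordinal.{0}}
    {C : Set (Set Ordinal.{0})} (hC : IsClubP κ (pk κ A) C) :
    ∃ f : Finset Ordinal.{0} → Set Ordinal.{0},
      Monotone f ∧ (∀ a, f a ∈ C) ∧ ∀ a : Finset Ordinal.{0}, ↑a ∩ A ⊆ f a := by
  obtain ⟨c₀, hc₀, -⟩ := hC.2.1 ∅ ⟨empty_subset _, cardLT_of_finite hκ.aleph0_le finite_empty⟩
  have hcof : ∀ x, ∃ c ∈ C, x ∈ pk κ A → x ⊆ c := fun x => by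
    by_cases hx : x ∈ pk κ A
    · obtain ⟨c, hc, hxc⟩ := hC.2.1 x hx
      exact ⟨c, hc, fun _ => hxc⟩
    · exact ⟨c₀, hc₀, fun h => absurd h hx⟩
  choose c hcC hcsub using hcof
  exact ⟨_, monotoneSelector_spec hκ hC.1 hcC hcsub⟩

theorem exists_monotone_chain_of_mk_le {θ : Cardinal.{0}} (hθ : ℵ₀ ≤ θ) {y : Set Ordinal.{0}}
    (hy : #y ≤ lift.{1} θ) :
    ∃ Y : Ordinal.{0} → Set Ordinal.{0}, Monotone Y ∧ (∀ i, #(Y i) ≤ lift.{1} i.card) ∧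
      y = ⋃ i ∈ Iio θ.ord, Y i := by
  rw [← card_ord θ, ← mk_Iio_ordinal, le_def] at hy
  obtain ⟨e⟩ := hy
  refine ⟨fun i => {β | ∃ h : β ∈ y, (e ⟨β, h⟩ : Ordinal.{0}) < i}, ?_, fun i => ?_, ?_⟩
  · exact fun i j hij β ⟨h, hlt⟩ => ⟨h, hlt.trans_le hij⟩
  · rw [← mk_Iio_ordinal]
    refine mk_le_of_injective (f := fun β => (⟨e ⟨β.1, β.2.1⟩, β.2.2⟩ : Iio i)) fun β γ h => ?_
    exact Subtype.ext (Subtype.mk.inj (e.injective (Subtype.ext (Subtype.mk.inj h))))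
  · refine Subset.antisymm (fun β hβ => ?_) (iUnion₂_subset fun i _ β hβ => hβ.1)
    exact mem_biUnion ((isSuccLimit_ord hθ).succ_lt (e ⟨β, hβ⟩).2) ⟨hβ, Order.lt_succ _⟩

/-- Menas: by induction on `|y|`, since an infinite `y` is the union of a chain of length `|y|`
of smaller sets, and `imageFinsets f` commutes with that union. -/
theorem IsClubP.imageFinsets_mem {X C : Set (Set Ordinal.{0})} (hC : IsClubP κ X C)
    {f : Finset Ordinal.{0} → Set Ordinal.{0}} (hf : Monotone f) (hfC : ∀ a, f a ∈ C)
    {y : Set Ordinal.{0}} (hy : cardLT y κ) : imageFinsets f y ∈ C := by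
  suffices h : ∀ θ < κ, ∀ y : Set Ordinal.{0}, #y ≤ lift.{1} θ → imageFinsets f y ∈ C by
    obtain ⟨θ, hθ⟩ := mem_range_lift_of_le hy.le
    exact h θ (lift_lt.1 (hθ ▸ hy)) y hθ.ge
  intro θ
  induction θ using WellFoundedLT.induction with
  | _ θ ih =>
  intro hθκ y hy
  rcases lt_or_ge θ ℵ₀ with hfin | hinf
  · have hyfin : y.Finite := lt_aleph0_iff_set_finite.1 (hy.trans_lt (by simpa using hfin))
    rw [← hyfin.coe_toFinset, imageFinsets_coe hf]
    exact hfC _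
  · obtain ⟨Y, hYmono, hYcard, rfl⟩ := exists_monotone_chain_of_mk_le hinf hy
    have hord : θ.ord ≠ 0 := (ord_pos.2 (aleph0_pos.trans_le hinf)).ne'
    rw [imageFinsets_biUnion_Iio hord fun i j h _ => hYmono h]
    refine hC.2.2 _ _ hord (ord_lt_ord.2 hθκ) (fun i j h _ => imageFinsets_mono (hYmono h))
      fun i hi => ?_
    exact ih _ (lt_ord.1 hi) ((lt_ord.1 hi).trans hθκ) _ (hYcard i)

theorem imageFinsets_mem_pk (hκ : κ.IsRegular) {B : Set Ordinal.{0}}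
    {f : Finset Ordinal.{0} → Set Ordinal.{0}} (hf : ∀ a, f a ∈ pk κ B) {y : Set Ordinal.{0}}
    (hy : cardLT y κ) : imageFinsets f y ∈ pk κ B :=
  ⟨iUnion₂_subset fun a _ => (hf a).1, cardLT_imageFinsets hκ hy fun a => (hf a).2⟩

theorem isClubP_setOf_imageFinsets_subset (hκ : κ.IsRegular) (hκu : ℵ₀ < κ)
    {B : Set Ordinal.{0}} {f : Finset Ordinal.{0} → Set Ordinal.{0}} (hf : ∀ a, f a ∈ pk κ B) :
    IsClubP κ (pk κ B) {y | y ∈ pk κ B ∧ imageFinsets f y ⊆ y} := by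
  refine ⟨fun y hy => hy.1, fun y₀ hy₀ => ?_, fun δ g hδ hδκ hchain hmem => ?_⟩
  · let F : ℕ → Set Ordinal.{0} := fun n => Nat.rec y₀ (fun _ z => z ∪ imageFinsets f z) n
    have hFpk : ∀ n, F n ∈ pk κ B := by
      intro n
      induction n with
      | zero => exact hy₀
      | succ n ih =>
        exact ⟨union_subset ih.1 (imageFinsets_mem_pk hκ hf ih.2).1,
          cardLT_union hκ.aleph0_le ih.2 (imageFinsets_mem_pk hκ hf ih.2).2⟩
    have hFmono : Monotone F := monotone_nat_of_le_succ fun n => subset_union_left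
    refine ⟨⋃ n, F n, ⟨⟨iUnion_subset fun n => (hFpk n).1,
      cardLT_iUnion_nat hκ hκu fun n => (hFpk n).2⟩, ?_⟩, subset_iUnion F 0⟩
    rw [imageFinsets_iUnion hFmono.directed_le]
    exact iUnion_mono' fun n => ⟨n + 1, subset_union_right⟩
  · refine ⟨⟨iUnion₂_subset fun i hi => (hmem i hi).1.1,
      cardLT_biUnion_Iio hκ hδκ fun i hi => (hmem i hi).1.2⟩, ?_⟩
    rw [imageFinsets_biUnion_Iio hδ hchain]
    exact biUnion_mono subset_rfl fun i hi => (hmem i hi).2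

theorem IsClubP.preimage_inter (hκ : κ.IsRegular) {A B : Set Ordinal.{0}}
    {C : Set (Set Ordinal.{0})} (hC : IsClubP κ (pk κ (A ∩ B)) C) :
    IsClubP κ (pk κ A) {x | x ∈ pk κ A ∧ x ∩ B ∈ C} := by
  refine ⟨fun x hx => hx.1, fun x hx => ?_, fun δ g hδ hδκ hchain hmem => ?_⟩
  · obtain ⟨c, hcC, hxc⟩ :=
      hC.2.1 (x ∩ B) ⟨inter_subset_inter_left _ hx.1, cardLT_mono inter_subset_left hx.2⟩
    have hc := hC.1 hcC
    have hcB : (x ∪ c) ∩ B = c := by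
      rw [union_inter_distrib_right, inter_eq_left.2 (hc.1.trans inter_subset_right),
        union_eq_right.2 hxc]
    refine ⟨x ∪ c, ⟨⟨union_subset hx.1 (hc.1.trans inter_subset_left),
      cardLT_union hκ.aleph0_le hx.2 hc.2⟩, by rwa [hcB]⟩, subset_union_left⟩
  · refine ⟨⟨iUnion₂_subset fun i hi => (hmem i hi).1.1,
      cardLT_biUnion_Iio hκ hδκ fun i hi => (hmem i hi).1.2⟩, ?_⟩
    rw [iUnion₂_inter]
    exact hC.2.2 δ (fun i => g i ∩ B) hδ hδκ
      (fun i j hij hj => inter_subset_inter_left _ (hchain i j hij hj)) fun i hi => (hmem i hi).2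

theorem IsStatP.mono {X S T : Set (Set Ordinal.{0})} (hS : IsStatP κ X S) (hST : S ⊆ T)
    (hTX : T ⊆ X) : IsStatP κ X T :=
  ⟨hTX, fun C hC => (hS.2 C hC).mono (inter_subset_inter_left _ hST)⟩

theorem IsStatP.image_inter (hκ : κ.IsRegular) {A : Set Ordinal.{0}} {T : Set (Set Ordinal.{0})}
    (hT : IsStatP κ (pk κ A) T) (B : Set Ordinal.{0}) :
    IsStatP κ (pk κ (A ∩ B)) ((· ∩ B) '' T) := by
  refine ⟨?_, fun C hC => ?_⟩
  · rintro _ ⟨x, hx, rfl⟩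
    exact ⟨inter_subset_inter_left _ (hT.1 hx).1, cardLT_mono inter_subset_left (hT.1 hx).2⟩
  · obtain ⟨x, hxT, -, hxC⟩ := hT.2 _ (hC.preimage_inter hκ)
    exact ⟨x ∩ B, mem_image_of_mem _ hxT, hxC⟩

theorem IsStatP.preimage_inter (hκ : κ.IsRegular) (hκu : ℵ₀ < κ) {A B : Set Ordinal.{0}}
    (hBA : B ⊆ A) {S : Set (Set Ordinal.{0})} (hS : IsStatP κ (pk κ B) S) :
    IsStatP κ (pk κ A) {x | x ∈ pk κ A ∧ x ∩ B ∈ S} := by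
  refine ⟨fun x hx => hx.1, fun C hC => ?_⟩
  obtain ⟨f, hfmono, hfC, hfA⟩ := exists_monotone_selector hκ hC
  have hfB : ∀ a, f a ∩ B ∈ pk κ B :=
    fun a => ⟨inter_subset_right, cardLT_mono inter_subset_left (hC.1 (hfC a)).2⟩
  obtain ⟨y, hyS, hyB, hyclosed⟩ := hS.2 _ (isClubP_setOf_imageFinsets_subset hκ hκu hfB)
  rw [imageFinsets_inter] at hyclosed
  have hxC := hC.imageFinsets_mem hfmono hfC hyB.2
  have hxy : imageFinsets f y ∩ B = y := by
    refine hyclosed.antisymm (subset_inter (subset_imageFinsets fun α hα => ?_) hyB.1)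
    exact hfA {α} ⟨Finset.mem_singleton_self α, hBA (hyB.1 hα)⟩
  exact ⟨imageFinsets f y, ⟨hC.1 hxC, by rwa [hxy]⟩, hxC⟩

theorem StatReflect.mono (hκ : κ.IsRegular) (hκu : ℵ₀ < κ) {μ lam : Cardinal.{0}}
    (hκμ : κ ≤ μ) (hμlam : μ ≤ lam) (H : StatReflect κ lam) : StatReflect κ μ := by
  intro S hS
  obtain ⟨A, hκA, hAlam, hAcard, hAS⟩ :=
    H _ (hS.preimage_inter hκ hκu (A := Iio lam.ord) (Iio_subset_Iio (ord_le_ord.2 hμlam)))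
  have hκAμ : Iio κ.ord ⊆ A ∩ Iio μ.ord := subset_inter hκA (Iio_subset_Iio (ord_le_ord.2 hκμ))
  refine ⟨A ∩ Iio μ.ord, hκAμ, inter_subset_right, ?_, ?_⟩
  · refine (hAcard ▸ mk_le_mk_of_subset inter_subset_left).antisymm ?_
    simpa using mk_le_mk_of_subset hκAμ
  · refine (IsStatP.image_inter hκ (A := A) hAS (Iio μ.ord)).mono ?_ ?_
    · rintro _ ⟨x, ⟨⟨-, hxS⟩, hxA⟩, rfl⟩
      exact ⟨hxS, inter_subset_inter_left _ hxA⟩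
    · rintro x ⟨hxS, hxA⟩
      exact ⟨hxA, (hS.1 hxS).2⟩

end Club

/-- For `κ ≤ μ < λ`, stationary reflection for `P_κ λ` implies stationary reflection
for `P_κ μ`; consequently it fails at every `λ ≥ κ⁺` iff it fails at `λ = κ⁺`. -/
theorem statReflect_mono (κ μ lam : Cardinal.{0})
    (hκ : κ.IsRegular) (hκu : Cardinal.aleph0 < κ)
    (hκμ : κ ≤ μ) (hμlam : μ < lam) :
    (StatReflect κ lam → StatReflect κ μ) ∧
    ((∀ l : Cardinal.{0}, Order.succ κ ≤ l → ¬ StatReflect κ l) ↔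
      ¬ StatReflect κ (Order.succ κ)) :=
  ⟨StatReflect.mono hκ hκu hκμ hμlam.le, fun h => h _ le_rfl,
    fun h _ hl hrefl => h (hrefl.mono hκ hκu (Order.le_succ κ) hl)⟩
end

section
/- Let ν < κ be regular uncountable cardinals and assume cf(ν, γ) < κ for every γ with ν < γ < κ. Then there exist a sequence ⟨c_ξ : ξ < κ⟩ of elements of P_ν κ and a stationary set T ⊆ {γ < κ : cf γ = ν} such that for every γ ∈ T, the family {c_ξ : ξ < γ} is cofinal in (P_ν γ, ⊆). -/
set_option autoImplicit false

open Cardinal Set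

/-!
Fix, for every `β ∈ (ν, κ)`, a cofinal family `⟨d_β ξ : ξ < θ_β⟩` in `P_ν β` with `θ_β < κ`, and
interleave all of them into a single `κ`-sequence `c` through a pairing `κ × κ → κ`. Let `F β`
bound the positions in `c` of the members of `d_β`. The ordinals `γ < κ` of cofinality `ν` that
are closed under `F` form a stationary set: every club contains the supremum of a strictly
increasing `ν`-sequence of its points, each chosen above the `F`-values below its predecessors.
For such a `γ`, a set `x ∈ P_ν γ` is bounded below `γ` because `|x| < ν = cf γ`, so it lies in
some `d_β ξ` with `β < γ`, and the position of `d_β ξ` in `c` is below `F β < γ`.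
-/

open Ordinal

universe u

theorem Cardinal.IsRegular.iSup_Iio_lt_ord {κ : Cardinal.{u}} (hκ : κ.IsRegular)
    {δ : Ordinal.{u}} (hδ : δ < κ.ord) {f : Iio δ → Ordinal.{u}} (hf : ∀ i, f i < κ.ord) :
    ⨆ i, f i < κ.ord := by
  apply Ordinal.lift_iSup_lt_of_lt_cof _ hf
  rwa [← lift_cof, hκ.cof_ord, Cardinal.mk_Iio_ordinal, lift_lift, lift_lt, ← lt_ord]

namespace Ordinal

noncomputable def stepSeq (step : Ordinal.{u} → Ordinal.{u}) (α : Ordinal.{u}) : Ordinal.{u} :=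
  step (⨆ ξ : Iio α, stepSeq step ξ + 1)
termination_by α
decreasing_by exact ξ.2

theorem stepSeq_eq (step : Ordinal.{u} → Ordinal.{u}) (α : Ordinal.{u}) :
    stepSeq step α = step (⨆ ξ : Iio α, stepSeq step ξ + 1) := by
  rw [stepSeq]

variable {step : Ordinal.{u} → Ordinal.{u}}

theorem stepSeq_strictMono (hstep : ∀ δ, δ ≤ step δ) : StrictMono (stepSeq step) := by
  intro p q hpq
  have hp : stepSeq step p < ⨆ ξ : Iio q, stepSeq step ξ + 1 :=
    lt_iSup_add_one_iff.2 ⟨⟨p, hpq⟩, le_rfl⟩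
  exact hp.trans_le (stepSeq_eq step q ▸ hstep _)

theorem iSup_stepSeq_add_one_lt_ord {κ : Cardinal.{u}} (hκ : κ.IsRegular)
    (hstep : ∀ δ < κ.ord, step δ < κ.ord) {α : Ordinal.{u}} (hα : α < κ.ord) :
    ⨆ ξ : Iio α, stepSeq step ξ + 1 < κ.ord := by
  induction α using WellFoundedLT.induction with
  | ind α IH =>
    refine hκ.iSup_Iio_lt_ord hα fun ξ => (isSuccLimit_ord hκ.aleph0_le).add_one_lt ?_
    rw [stepSeq_eq]
    exact hstep _ (IH ξ ξ.2 (ξ.2.trans hα))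

end Ordinal

theorem exists_pairing_lt_ord {κ : Cardinal.{u}} (hκ : ℵ₀ ≤ κ) :
    ∃ (code : Ordinal.{u} → Ordinal.{u} → Ordinal.{u})
      (decode : Ordinal.{u} → Ordinal.{u} × Ordinal.{u}),
      ∀ β < κ.ord, ∀ ξ < κ.ord, code β ξ < κ.ord ∧ decode (code β ξ) = (β, ξ) := by
  obtain ⟨E⟩ : Nonempty (Iio κ.ord × Iio κ.ord ≃ Iio κ.ord) := by
    rw [← Cardinal.eq, mk_prod, Cardinal.lift_id, Cardinal.mk_Iio_ordinal, card_ord,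
      ← Cardinal.lift_mul, mul_eq_self hκ]
  refine ⟨fun β ξ => if h : β < κ.ord ∧ ξ < κ.ord then E (⟨β, h.1⟩, ⟨ξ, h.2⟩) else 0,
    fun η => if h : η < κ.ord then ((E.symm ⟨η, h⟩).1, (E.symm ⟨η, h⟩).2) else (0, 0),
    fun β hβ ξ hξ => ?_⟩
  have hE : (E (⟨β, hβ⟩, ⟨ξ, hξ⟩) : Ordinal) < κ.ord := (E _).2
  simp [hβ, hξ, hE]

theorem exists_lt_subset_Iio_of_cardLT {ν : Cardinal.{0}} (hν : ℵ₀ ≤ ν) {γ α : Ordinal.{0}}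
    (hγ : γ.cof = ν) (hαγ : α < γ) {x : Set Ordinal.{0}} (hxγ : x ⊆ Iio γ) (hx : cardLT x ν) :
    ∃ β, α < β ∧ β < γ ∧ x ⊆ Iio β := by
  have : Small.{0} x := small_subset hxγ
  have hγlim : Order.IsSuccLimit γ := one_lt_cof_iff.1 (aleph0_le_cof_iff.1 (hγ ▸ hν))
  have hsup : sSup x < γ := sSup_lt_of_lt_cof (by rwa [← lift_cof, hγ]) hxγ
  refine ⟨max α (sSup x) + 1, Order.lt_add_one_iff.2 (le_max_left _ _),
    hγlim.add_one_lt (max_lt hαγ hsup), fun a ha => ?_⟩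
  exact Order.lt_add_one_iff.2 <| (le_csSup Ordinal.bddAbove_of_small ha).trans (le_max_right _ _)

theorem exists_cofinal_families {ν κ : Cardinal.{0}} (hν : ν ≠ 0) (hκ : κ ≠ 0)
    (hcf : ∀ γ : Ordinal.{0}, ν.ord < γ → γ < κ.ord →
      ∃ θ : Ordinal.{0}, θ < κ.ord ∧ ∃ d : Ordinal.{0} → Set Ordinal.{0},
        (∀ ξ < θ, d ξ ⊆ Set.Iio γ ∧ cardLT (d ξ) ν) ∧
        ∀ x : Set Ordinal.{0}, x ⊆ Set.Iio γ → cardLT x ν → ∃ ξ < θ, x ⊆ d ξ) :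
    ∃ (θ : Ordinal.{0} → Ordinal.{0}) (d : Ordinal.{0} → Ordinal.{0} → Set Ordinal.{0}),
      (∀ β, θ β < κ.ord) ∧ (∀ β ξ, d β ξ ∈ pkl ν κ.ord) ∧
      ∀ β, ν.ord < β → β < κ.ord → ∀ x ⊆ Iio β, cardLT x ν → ∃ ξ < θ β, x ⊆ d β ξ := by
  have hempty : (∅ : Set Ordinal.{0}) ∈ pkl ν κ.ord :=
    ⟨empty_subset _, by simp [cardLT, pos_iff_ne_zero, hν]⟩
  have hfamily : ∀ β, ∃ θ < κ.ord, ∃ d : Ordinal.{0} → Set Ordinal.{0},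
      (∀ ξ, d ξ ∈ pkl ν κ.ord) ∧
      (ν.ord < β → β < κ.ord → ∀ x ⊆ Iio β, cardLT x ν → ∃ ξ < θ, x ⊆ d ξ) := by
    intro β
    by_cases hβ : ν.ord < β ∧ β < κ.ord
    · obtain ⟨θ, hθ, d, hd, hcov⟩ := hcf β hβ.1 hβ.2
      refine ⟨θ, hθ, fun ξ => if ξ < θ then d ξ else ∅, fun ξ => ?_, fun _ _ x hxβ hx => ?_⟩
      · show (if ξ < θ then d ξ else ∅) ∈ pkl ν κ.ord
        split_ifs with hξ
        · exact ⟨(hd ξ hξ).1.trans (Iio_subset_Iio hβ.2.le), (hd ξ hξ).2⟩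
        · exact hempty
      · obtain ⟨ξ, hξ, hxd⟩ := hcov x hxβ hx
        exact ⟨ξ, hξ, by simpa [hξ] using hxd⟩
    · exact ⟨0, ord_pos.2 (pos_iff_ne_zero.2 hκ), fun _ => ∅, fun _ => hempty,
        fun h₁ h₂ => absurd ⟨h₁, h₂⟩ hβ⟩
  choose θ hθ d hd hcov using hfamily
  exact ⟨θ, d, hθ, hd, hcov⟩

theorem isStatIn_setOf_cof_eq_closed {ν κ : Cardinal.{0}} (hν : ν.IsRegular)
    (hκ : κ.IsRegular) (hνκ : ν < κ) {F : Ordinal.{0} → Ordinal.{0}}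
    (hF : ∀ β < κ.ord, F β < κ.ord) :
    IsStatIn {γ | γ < κ.ord ∧ γ.cof = ν ∧ ∀ β < γ, F β < γ} κ.ord := by
  refine ⟨fun γ hγ => hγ.1, fun C ⟨hCκ, hCunb, hCclosed⟩ => ?_⟩
  have hκlim := isSuccLimit_ord hκ.aleph0_le
  have hνlim := isSuccLimit_ord hν.aleph0_le
  set H : Ordinal.{0} → Ordinal.{0} := fun δ => ⨆ β : Iio δ, F β + 1
  have hFH : ∀ β δ, β < δ → F β < H δ := fun β δ h => lt_iSup_add_one_iff.2 ⟨⟨β, h⟩, le_rfl⟩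
  have hH : ∀ δ < κ.ord, H δ < κ.ord := fun δ hδ =>
    hκ.iSup_Iio_lt_ord hδ fun β => hκlim.add_one_lt (hF β (β.2.trans hδ))
  have hstep : ∀ δ, ∃ ε, δ ≤ ε ∧ (δ < κ.ord → ε ∈ C ∧ H δ ≤ ε) := by
    intro δ
    by_cases hδ : δ < κ.ord
    · obtain ⟨ε, hεC, hε⟩ := hCunb _ (max_lt hδ (hH δ hδ))
      exact ⟨ε, (le_max_left _ _).trans hε, fun _ => ⟨hεC, (le_max_right _ _).trans hε⟩⟩
    · exact ⟨δ, le_rfl, fun h => absurd h hδ⟩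
  choose step hle hstepC using hstep
  set g := stepSeq step
  have hg_eq : ∀ α, g α = step (⨆ ξ : Iio α, g ξ + 1) := stepSeq_eq step
  have hgν : ∀ α < ν.ord, g α ∈ C ∧ H (⨆ ξ : Iio α, g ξ + 1) ≤ g α := fun α hα => by
    rw [hg_eq]
    exact hstepC _ (iSup_stepSeq_add_one_lt_ord hκ (fun δ hδ => hCκ (hstepC δ hδ).1)
      (hα.trans (ord_lt_ord.2 hνκ)))
  have hgmono : StrictMono fun α : Iio ν.ord => g α :=
    (stepSeq_strictMono hle).comp (Subtype.strictMono_coe _)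
  obtain ⟨γ, hγ⟩ : ∃ γ, γ = ⨆ α : Iio ν.ord, g α := ⟨_, rfl⟩
  have hgγ : ∀ α : Iio ν.ord, g α < γ := fun α =>
    (hgmono (show α < ⟨α + 1, hνlim.add_one_lt α.2⟩ from lt_add_one α.1)).trans_le
      (hγ ▸ Ordinal.le_iSup (fun α : Iio ν.ord => g α) _)
  have hγκ : γ < κ.ord := hγ ▸ hκ.iSup_Iio_lt_ord (ord_lt_ord.2 hνκ) fun α => hCκ (hgν α α.2).1
  have hγcof : γ.cof = ν := by
    rw [hγ, cof_iSup_Iio hgmono hνlim.isSuccPrelimit, hν.cof_ord]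
  refine ⟨γ, ⟨hγκ, hγcof, fun β hβ => ?_⟩, hCclosed γ ?_ hγκ fun β hβ => ?_⟩
  · obtain ⟨α, hα⟩ := Ordinal.lt_iSup_iff.1 (hγ ▸ hβ)
    have hβS : β < ⨆ ξ : Iio (α.1 + 1), g ξ + 1 :=
      lt_iSup_add_one_iff.2 ⟨⟨α, lt_add_one α.1⟩, hα.le⟩
    have hα₁ : α.1 + 1 < ν.ord := hνlim.add_one_lt α.2
    exact ((hFH _ _ hβS).trans_le (hgν _ hα₁).2).trans (hgγ ⟨_, hα₁⟩)
  · exact (pos_of_gt (hgγ ⟨0, hνlim.pos⟩)).ne'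
  · obtain ⟨α, hα⟩ := Ordinal.lt_iSup_iff.1 (hγ ▸ hβ)
    exact ⟨g α, (hgν α α.2).1, hα, hgγ α⟩

theorem exists_cofinal_system_general (ν κ : Cardinal.{0})
    (hν : ν.IsRegular)
    (hκ : κ.IsRegular) (hνκ : ν < κ)
    (hcf : ∀ γ : Ordinal.{0}, ν.ord < γ → γ < κ.ord →
      ∃ θ : Ordinal.{0}, θ < κ.ord ∧ ∃ d : Ordinal.{0} → Set Ordinal.{0},
        (∀ ξ < θ, d ξ ⊆ Set.Iio γ ∧ cardLT (d ξ) ν) ∧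
        ∀ x : Set Ordinal.{0}, x ⊆ Set.Iio γ → cardLT x ν → ∃ ξ < θ, x ⊆ d ξ) :
    ∃ c : Ordinal.{0} → Set Ordinal.{0},
      (∀ ξ < κ.ord, c ξ ⊆ Set.Iio κ.ord ∧ cardLT (c ξ) ν) ∧
      ∃ T : Set Ordinal.{0}, T ⊆ {γ | γ.cof = ν} ∧ IsStatIn T κ.ord ∧
        ∀ γ ∈ T, ∀ x : Set Ordinal.{0}, x ⊆ Set.Iio γ → cardLT x ν →
          ∃ ξ < γ, x ⊆ c ξ := by
  have hκlim := isSuccLimit_ord hκ.aleph0_le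
  obtain ⟨θ, d, hθ, hd, hcov⟩ := exists_cofinal_families hν.pos.ne' hκ.pos.ne' hcf
  obtain ⟨code, decode, hcode⟩ := exists_pairing_lt_ord hκ.aleph0_le
  -- the `ν.ord + 1` term makes every closure point of `F` exceed `ν.ord`
  set F : Ordinal.{0} → Ordinal.{0} := fun β => max (ν.ord + 1) (⨆ ξ : Iio (θ β), code β ξ + 1)
  have hF : ∀ β < κ.ord, F β < κ.ord := fun β hβ =>
    max_lt (hκlim.add_one_lt (ord_lt_ord.2 hνκ)) <| hκ.iSup_Iio_lt_ord (hθ β) fun ξ =>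
      hκlim.add_one_lt (hcode β hβ ξ (ξ.2.trans (hθ β))).1
  refine ⟨fun η => d (decode η).1 (decode η).2, fun η _ => hd _ _, _, fun γ hγ => hγ.2.1,
    isStatIn_setOf_cof_eq_closed hν hκ hνκ hF, ?_⟩
  rintro γ ⟨hγκ, hγcof, hγF⟩ x hxγ hx
  have hνγ : ν.ord < γ :=
    (lt_add_one _).trans <| (le_max_left _ _).trans_lt (hγF 0 (cof_pos.1 (hγcof ▸ hν.pos)))
  obtain ⟨β, hνβ, hβγ, hxβ⟩ := exists_lt_subset_Iio_of_cardLT hν.aleph0_le hγcof hνγ hxγ hx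
  have hβκ : β < κ.ord := hβγ.trans hγκ
  obtain ⟨ξ, hξ, hxd⟩ := hcov β hνβ hβκ x hxβ hx
  have hcodeF : code β ξ < ⨆ ξ : Iio (θ β), code β ξ + 1 :=
    lt_iSup_add_one_iff.2 ⟨⟨ξ, hξ⟩, le_rfl⟩
  refine ⟨code β ξ, (hcodeF.trans_le (le_max_right _ _)).trans (hγF β hβγ), ?_⟩
  show x ⊆ d (decode (code β ξ)).1 (decode (code β ξ)).2
  rwa [(hcode β hβκ ξ (hξ.trans (hθ β))).2]

/-- If `ν < κ` are regular uncountable and `cf(ν, γ) < κ` for all `ν < γ < κ`, then there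
are `⟨c_ξ : ξ < κ⟩ ⊆ P_ν κ` and a stationary `T ⊆ S^ν_κ` such that for every `γ ∈ T`,
`{c_ξ : ξ < γ}` is cofinal in `(P_ν γ, ⊆)`. -/
theorem exists_cofinal_system (ν κ : Cardinal.{0})
    (hν : ν.IsRegular) (hνu : Cardinal.aleph0 < ν)
    (hκ : κ.IsRegular) (hκu : Cardinal.aleph0 < κ) (hνκ : ν < κ)
    (hcf : ∀ γ : Ordinal.{0}, ν.ord < γ → γ < κ.ord →
      ∃ θ : Ordinal.{0}, θ < κ.ord ∧ ∃ d : Ordinal.{0} → Set Ordinal.{0},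
        (∀ ξ < θ, d ξ ⊆ Set.Iio γ ∧ cardLT (d ξ) ν) ∧
        ∀ x : Set Ordinal.{0}, x ⊆ Set.Iio γ → cardLT x ν → ∃ ξ < θ, x ⊆ d ξ) :
    ∃ c : Ordinal.{0} → Set Ordinal.{0},
      (∀ ξ < κ.ord, c ξ ⊆ Set.Iio κ.ord ∧ cardLT (c ξ) ν) ∧
      ∃ T : Set Ordinal.{0}, T ⊆ {γ | γ.cof = ν} ∧ IsStatIn T κ.ord ∧
        ∀ γ ∈ T, ∀ x : Set Ordinal.{0}, x ⊆ Set.Iio γ → cardLT x ν →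
          ∃ ξ < γ, x ⊆ c ξ :=
  exists_cofinal_system_general ν κ hν hκ hνκ hcf
end

section
/- Let ν be a regular cardinal and θ a cardinal with cf θ < ν < θ. Then cf(ν, θ) > θ; equivalently, for any set z of size θ, P_ν z has no cofinal subset of size ≤ θ. -/
set_option autoImplicit false

open Cardinal Set

/-!
Fix a sequence `β_i` (`i < cf θ`) cofinal in `θ`. For each `i`, the sets `c ξ` with `ξ ≤ β_i`
are fewer than `θ` and each has size `< ν < θ`, so some `α_i < θ` lies in none of them. The set
`{α_i | i < cf θ}` has size `≤ cf θ < ν`, so it would be covered by some `c ξ`; but `ξ ≤ β_i` for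
some `i`, and `α_i ∉ c ξ`.
-/

universe u

theorem mk_biUnion_Iio_lt {α : Type (u + 1)} {θ ν : Cardinal.{u}} (hθ : ℵ₀ ≤ θ) (hν : ν < θ)
    {β : Ordinal.{u}} (hβ : β < θ.ord) (c : Ordinal.{u} → Set α)
    (hc : ∀ ξ < β, #(c ξ) ≤ lift.{u + 1} ν) :
    #(⋃ ξ ∈ Iio β, c ξ) < lift.{u + 1} θ :=
  calc #(⋃ ξ ∈ Iio β, c ξ)
      ≤ #(Iio β) * ⨆ ξ : Iio β, #(c ξ) := mk_biUnion_le c (Iio β)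
    _ ≤ lift.{u + 1} β.card * lift.{u + 1} ν := by
        rw [mk_Iio_ordinal]
        exact mul_le_mul_right (ciSup_le' fun ξ : Iio β ↦ hc ξ.1 ξ.2) _
    _ < lift.{u + 1} θ := by
        rw [← lift_mul, lift_lt]
        exact mul_lt_of_lt hθ (lt_ord.mp hβ) hν

theorem exists_lt_ord_notMem_biUnion_Iio {θ ν : Cardinal.{u}} (hθ : ℵ₀ ≤ θ) (hν : ν < θ)
    {β : Ordinal.{u}} (hβ : β < θ.ord) (c : Ordinal.{u} → Set Ordinal.{u})
    (hc : ∀ ξ < β, #(c ξ) ≤ lift.{u + 1} ν) :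
    ∃ α < θ.ord, α ∉ ⋃ ξ ∈ Iio β, c ξ := by
  by_contra! hcover
  have hlt := (mk_le_mk_of_subset (s := Iio θ.ord) hcover).trans_lt
    (mk_biUnion_Iio_lt hθ hν hβ c hc)
  rw [mk_Iio_ordinal, card_ord] at hlt
  exact hlt.false

/-- If `ν` is regular and `cf θ < ν < θ`, then `cf(ν, θ) > θ`: no family of `≤ θ` sets
in `P_ν θ` is cofinal in `(P_ν θ, ⊆)`. -/
theorem cov_gt (ν θ : Cardinal.{0}) (hν : ν.IsRegular)
    (h1 : θ.ord.cof < ν) (h2 : ν < θ) :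
    ¬ ∃ c : Ordinal.{0} → Set Ordinal.{0},
        (∀ ξ < θ.ord, c ξ ⊆ Set.Iio θ.ord ∧ cardLT (c ξ) ν) ∧
        ∀ x : Set Ordinal.{0}, x ⊆ Set.Iio θ.ord → cardLT x ν →
          ∃ ξ < θ.ord, x ⊆ c ξ := by
  rintro ⟨c, hc, hcov⟩
  have hθ : ℵ₀ ≤ θ := hν.aleph0_le.trans h2.le
  obtain ⟨f, hf⟩ := Ordinal.exists_isFundamentalSeq (o := θ.ord) rfl
  have havoid (i : Iio θ.ord.cof.ord) : ∃ α < θ.ord, α ∉ ⋃ ξ ∈ Iio ((f i).1 + 1), c ξ := by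
    have hlt := (isSuccLimit_ord hθ).add_one_lt (f i).2
    exact exists_lt_ord_notMem_biUnion_Iio hθ h2 hlt c fun ξ hξ ↦ (hc ξ (hξ.trans hlt)).2.le
  choose g hgθ hg using havoid
  have hg_card : cardLT (range g) ν :=
    calc #(range g) ≤ #(Iio θ.ord.cof.ord) := mk_range_le
      _ = lift θ.ord.cof := by rw [mk_Iio_ordinal, card_ord]
      _ < lift ν := lift_lt.mpr h1
  obtain ⟨ξ, hξ, hsub⟩ := hcov (range g) (range_subset_iff.mpr hgθ) hg_card
  obtain ⟨_, ⟨i, rfl⟩, hi⟩ := hf.isCofinal_range ⟨ξ, hξ⟩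
  have hξi : ξ < (f i).1 + 1 := Order.lt_add_one_iff.mpr (Subtype.coe_le_coe.mpr hi)
  exact hg i (mem_biUnion hξi (hsub (mem_range_self i)))
end

section
/- Let κ ≤ μ be cardinals with κ regular uncountable and cf μ < κ. Then P_κ μ has no stationary subset of cardinality ≤ μ. -/
/-!
A stationary subset of `P_κ μ` is cofinal, since for each `x` the cone `{y | x ⊆ y}` is club.
So it suffices to show that a family `S ⊆ P_κ μ` with `|S| ≤ μ` is not cofinal. Enumerate `S`
injectively by ordinals below `μ` and fix a cofinal sequence `(f i)_{i < cf μ}` in `μ`. Fewer than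
`μ` members of `S` have index `≤ f i`, each of size `< κ < μ`, so some `b i < μ` lies in none of
them. The set `{b i | i < cf μ}` lies in `P_κ μ`, but is contained in no member of `S`: the index
of that member is `≤ f i` for some `i`, and it misses `b i`.
-/

set_option autoImplicit false

open Cardinal Set

lemma cardLT_biUnion {κ : Cardinal.{0}} (hκ : κ.IsRegular) {δ : Ordinal.{0}}
    (f : Ordinal.{0} → Set Ordinal.{0}) (hδ : δ < κ.ord)
    (hf : ∀ i < δ, cardLT (f i) κ) : cardLT (⋃ i ∈ Iio δ, f i) κ := by
  have hδκ : #(Iio δ) < lift.{1} κ := by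
    rw [mk_Iio_ordinal]
    exact lift_lt.2 (lt_ord.1 hδ)
  exact (mk_biUnion_le f (Iio δ)).trans_lt <| mul_lt_of_lt hκ.lift.aleph0_le hδκ <|
    iSup_lt_of_lt_cof_ord (by rwa [hκ.lift.cof_ord]) fun i => hf i.1 i.2

lemma isClubP_pkl_superset {κ : Cardinal.{0}} {Λ : Ordinal.{0}} (hκ : κ.IsRegular)
    {x : Set Ordinal.{0}} (hx : x ∈ pkl κ Λ) :
    IsClubP κ (pkl κ Λ) {y | y ∈ pkl κ Λ ∧ x ⊆ y} := by
  refine ⟨fun y hy => hy.1, fun z hz => ?_, fun δ f hδ0 hδ _ hfC => ?_⟩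
  · have hxz : cardLT (x ∪ z) κ := (mk_union_le x z).trans_lt <|
      add_lt_of_lt (aleph0_le_lift.2 hκ.aleph0_le) hx.2 hz.2
    exact ⟨x ∪ z, ⟨⟨union_subset hx.1 hz.1, hxz⟩, subset_union_left⟩, subset_union_right⟩
  · have h0 : 0 < δ := pos_iff_ne_zero.2 hδ0
    exact ⟨⟨iUnion₂_subset fun i hi => (hfC i hi).1.1,
      cardLT_biUnion hκ f hδ fun i hi => (hfC i hi).1.2⟩,
      (hfC 0 h0).2.trans (subset_biUnion_of_mem (u := f) h0)⟩

lemma IsStatP.exists_superset {κ : Cardinal.{0}} {Λ : Ordinal.{0}} (hκ : κ.IsRegular)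
    {S : Set (Set Ordinal.{0})} (hS : IsStatP κ (pkl κ Λ) S) {x : Set Ordinal.{0}}
    (hx : x ∈ pkl κ Λ) : ∃ y ∈ S, x ⊆ y :=
  let ⟨y, hyS, hyC⟩ := hS.2 _ (isClubP_pkl_superset hκ hx)
  ⟨y, hyS, hyC.2⟩

lemma exists_lt_ord_notMem_iUnion {κ μ : Cardinal.{0}} (hμ : ℵ₀ ≤ μ) (hκμ : κ < μ)
    {ι : Type 1} (X : ι → Set Ordinal.{0}) (hι : #ι < lift.{1} μ)
    (hX : ∀ i, cardLT (X i) κ) : ∃ β < μ.ord, β ∉ ⋃ i, X i := by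
  have hU : #(⋃ i, X i) < #(Iio μ.ord) := by
    rw [mk_Iio_ordinal, card_ord]
    exact (mk_iUnion_le X).trans_lt <| mul_lt_of_lt (aleph0_le_lift.2 hμ) hι <|
      (ciSup_le' fun i => (hX i).le).trans_lt (lift_lt.2 hκμ)
  simpa [not_subset] using fun h : Iio μ.ord ⊆ ⋃ i, X i => (mk_le_mk_of_subset h).not_gt hU

lemma mk_Iic_lt_of_lt_ord {μ : Cardinal.{0}} (hμ : ℵ₀ ≤ μ) {o : Ordinal.{0}} (ho : o < μ.ord) :
    #(Iic o) < lift.{1} μ := by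
  rw [← Order.Iio_succ, mk_Iio_ordinal, lift_lt, ← lt_ord]
  exact (isSuccLimit_ord hμ).succ_lt ho

lemma exists_pkl_not_subset_of_mk_le {κ μ : Cardinal.{0}} (hμ : ℵ₀ ≤ μ) (hκμ : κ < μ)
    (hcof : μ.ord.cof < κ) {S : Set (Set Ordinal.{0})} (hS : S ⊆ pkl κ μ.ord)
    (hScard : #S ≤ lift.{1} μ) : ∃ y ∈ pkl κ μ.ord, ∀ s ∈ S, ¬ y ⊆ s := by
  obtain ⟨g⟩ : Nonempty (S ↪ Iio μ.ord) := by rwa [← le_def, mk_Iio_ordinal, card_ord]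
  set idx : S → Ordinal := fun s => g s
  have hidx : Function.Injective idx := Subtype.val_injective.comp g.injective
  obtain ⟨f, hf⟩ := Ordinal.exists_isFundamentalSeq (o := μ.ord) rfl
  have hb : ∀ i, ∃ b < μ.ord, ∀ s : S, idx s ≤ f i → b ∉ (s : Set Ordinal) := by
    intro i
    have hcard : #(idx ⁻¹' Iic (f i : Ordinal)) < lift.{1} μ :=
      (mk_preimage_of_injective idx _ hidx).trans_lt (mk_Iic_lt_of_lt_ord hμ (f i).2)
    obtain ⟨b, hbμ, hbX⟩ := exists_lt_ord_notMem_iUnion hμ hκμ (fun s => s.1.1) hcard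
      fun s => (hS s.1.2).2
    exact ⟨b, hbμ, fun s hs hbs => hbX (mem_iUnion.2 ⟨⟨s, hs⟩, hbs⟩)⟩
  choose b hbμ hbS using hb
  have hrange : cardLT (range b) κ :=
    mk_range_le.trans_lt (by rwa [mk_Iio_ordinal, card_ord, lift_lt])
  refine ⟨range b, ⟨range_subset_iff.2 hbμ, hrange⟩, fun s hs hbs => ?_⟩
  obtain ⟨_, ⟨i, rfl⟩, hi⟩ := hf.isCofinal_range (g ⟨s, hs⟩)
  exact hbS i ⟨s, hs⟩ hi (hbs (mem_range_self i))

theorem no_small_stationary_general (κ μ : Cardinal.{0})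
    (hκ : κ.IsRegular)
    (hκμ : κ ≤ μ) (hcof : μ.ord.cof < κ) :
    ¬ ∃ S : Set (Set Ordinal.{0}),
        IsStatP κ (pkl κ μ.ord) S ∧ Cardinal.mk ↥S ≤ Cardinal.lift.{1, 0} μ := by
  rintro ⟨S, hS, hScard⟩
  have hκμ' : κ < μ := hκμ.lt_of_ne (by rintro rfl; exact hcof.ne hκ.cof_ord)
  obtain ⟨y, hy, hyS⟩ :=
    exists_pkl_not_subset_of_mk_le (hκ.aleph0_le.trans hκμ) hκμ' hcof hS.1 hScard
  obtain ⟨s, hs, hys⟩ := hS.exists_superset hκ hy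
  exact hyS s hs hys

/-- If `κ ≤ μ`, `κ` regular uncountable and `cf μ < κ`, then `P_κ μ` has no stationary
subset of cardinality `≤ μ`. -/
theorem no_small_stationary (κ μ : Cardinal.{0})
    (hκ : κ.IsRegular) (hκu : Cardinal.aleph0 < κ)
    (hκμ : κ ≤ μ) (hcof : μ.ord.cof < κ) :
    ¬ ∃ S : Set (Set Ordinal.{0}),
        IsStatP κ (pkl κ μ.ord) S ∧ Cardinal.mk ↥S ≤ Cardinal.lift.{1, 0} μ :=
  no_small_stationary_general κ μ hκ hκμ hcof
end

section
/- Let κ be a regular uncountable cardinal, and for each γ with κ ≤ γ < κ⁺ let π_γ : κ → γ be a bijection. Suppose x ⊆ κ⁺ satisfies: (i) x ∩ κ is an ordinal of cofinality ω₁; (ii) for all α < β in x with β ≥ κ, lim(π_β``(π_β⁻¹(α))) ⊆ x; (iii) sup x has cofinality ω₁. Then x is σ-closed, i.e. for every b ⊆ x of order type ω with sup b < sup x, sup b ∈ x. -/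
set_option autoImplicit false

open Cardinal Set

universe u

/-- `lim A`: the set of ordinals `γ > 0` with `sup (A ∩ γ) = γ`. -/
def limPts (A : Set Ordinal.{0}) : Set Ordinal.{0} :=
  {γ | γ ≠ 0 ∧ sSup (A ∩ Set.Iio γ) = γ}

/-!
Fix `β ∈ x` above `s = sup b`, where `s ≥ κ` (below `κ` we are inside `δ ⊆ x`, which has
uncountable cofinality). Put `ξ n = π_β⁻¹ (b n) < κ`. If some `α ∈ x ∩ β` has
`π_β⁻¹ α > ξ n` for infinitely many `n`, then `s` is a limit point of `π_β '' π_β⁻¹ α ⊆ x`.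
Otherwise every `α ∈ x ∩ β`, in particular every `α < δ`, lies in some `π_β '' ξ n`; as
`cof δ = ω₁`, `δ` is a limit point of one of these countably many sets, so `δ ∈ x`, which forces
`δ = κ`. But `π_β '' ξ n` has fewer than `κ = cof κ` elements, so it is bounded in `κ`.
-/

lemma mem_limPts_iff {A : Set Ordinal.{0}} {γ : Ordinal.{0}} :
    γ ∈ limPts A ↔ γ ≠ 0 ∧ ∀ ζ < γ, ∃ a ∈ A, ζ < a ∧ a < γ := by
  have hbdd : BddAbove (A ∩ Iio γ) := bddAbove_Iio.mono inter_subset_right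
  have hle : sSup (A ∩ Iio γ) ≤ γ := csSup_le' fun a ha => ha.2.le
  constructor
  · rintro ⟨hγ, hsup⟩
    refine ⟨hγ, fun ζ hζ => ?_⟩
    obtain ⟨a, ⟨haA, haγ⟩, hζa⟩ := (lt_csSup_iff' hbdd).1 (hsup ▸ hζ)
    exact ⟨a, haA, hζa, haγ⟩
  · rintro ⟨hγ, hcofinal⟩
    refine ⟨hγ, le_antisymm hle (le_of_forall_lt fun ζ hζ => ?_)⟩
    obtain ⟨a, haA, hζa, haγ⟩ := hcofinal ζ hζ
    exact (lt_csSup_iff' hbdd).2 ⟨a, ⟨haA, haγ⟩, hζa⟩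

lemma iSup_nat_lt_of_aleph0_lt_cof {f : ℕ → Ordinal.{0}} {o : Ordinal.{0}}
    (ho : ℵ₀ < o.cof) (hf : ∀ n, f n < o) : ⨆ n, f n < o :=
  Ordinal.iSup_lt_of_lt_cof (by rwa [mk_nat]) hf

lemma StrictMono.lt_iSup_nat {b : ℕ → Ordinal.{u}} (hb : StrictMono b) (n : ℕ) :
    b n < ⨆ n, b n :=
  (hb n.lt_succ_self).trans_le (Ordinal.le_iSup b (n + 1))

lemma iSup_mem_limPts {b : ℕ → Ordinal.{0}} (hb : StrictMono b) {A : Set Ordinal.{0}}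
    (hA : {n | b n ∈ A}.Infinite) : ⨆ n, b n ∈ limPts A := by
  refine mem_limPts_iff.2 ⟨(hb.lt_iSup_nat 0).ne_bot, fun ζ hζ => ?_⟩
  obtain ⟨m, hm⟩ := (Ordinal.lt_iSup_iff).1 hζ
  obtain ⟨n, hnA, hmn⟩ := hA.exists_gt m
  exact ⟨b n, hnA, hm.trans (hb hmn), hb.lt_iSup_nat n⟩

lemma exists_mem_limPts_of_Iio_subset_iUnion {δ : Ordinal.{0}} (hδ : ℵ₀ < δ.cof)
    {A : ℕ → Set Ordinal.{0}} (hA : Iio δ ⊆ ⋃ n, A n) : ∃ n, δ ∈ limPts (A n) := by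
  have hδlim : Order.IsSuccLimit δ :=
    Ordinal.one_lt_cof_iff.1 (Cardinal.one_lt_aleph0.trans hδ)
  by_contra! h
  have hbound (n : ℕ) : ∃ ζ < δ, ∀ a ∈ A n, ζ < a → δ ≤ a := by
    have hnotlim := mt mem_limPts_iff.2 (h n)
    push Not at hnotlim
    exact hnotlim hδlim.ne_bot
  choose ζ hζδ hζ using hbound
  have hu : Order.succ (⨆ n, ζ n) < δ := hδlim.succ_lt (iSup_nat_lt_of_aleph0_lt_cof hδ hζδ)
  obtain ⟨n, hn⟩ := mem_iUnion.1 (hA hu)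
  exact (hζ n _ hn (Order.lt_succ_of_le (Ordinal.le_iSup ζ n))).not_gt hu

lemma notMem_limPts_of_mk_lt_cof {A : Set Ordinal.{0}} {γ : Ordinal.{0}}
    (hA : #A < Cardinal.lift.{1} γ.cof) : γ ∉ limPts A := fun hγ =>
  hγ.2.not_lt <| Ordinal.sSup_lt_of_lt_cof
    ((mk_le_mk_of_subset inter_subset_left).trans_lt (by rwa [Ordinal.lift_cof] at hA))
    fun _ ha => ha.2

lemma exists_lt_of_finite_setOf_lt {ι α : Type*} [Infinite ι] [LinearOrder α] {ξ : ι → α}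
    (hξ : ξ.Injective) (c : α) (hc : {n | ξ n < c}.Finite) : ∃ n, c < ξ n := by
  have hle : {n | ξ n ≤ c}.Finite :=
    (hc.union ((finite_singleton c).preimage hξ.injOn)).subset fun n hn =>
      (eq_or_lt_of_le hn).elim Or.inr Or.inl
  obtain ⟨n, hn⟩ := hle.infinite_compl.nonempty
  exact ⟨n, not_le.1 hn⟩

lemma eq_of_inter_Iio_eq_Iio {α : Type*} [LinearOrder α] {x : Set α} {o δ : α}
    (hδ : x ∩ Iio o = Iio δ) (hδx : δ ∈ x) : δ = o := by
  refine le_antisymm (not_lt.1 fun h => ?_) (not_lt.1 fun h => ?_)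
  · have ho : o ∈ Iio δ := h
    rw [← hδ] at ho
    exact self_notMem_Iio ho.2
  · have hδδ : δ ∈ x ∩ Iio o := ⟨hδx, h⟩
    rw [hδ] at hδδ
    exact self_notMem_Iio hδδ

lemma ord_notMem_limPts_image_Iio {κ : Cardinal.{0}} (hκ : κ.IsRegular)
    (f : Ordinal.{0} → Ordinal.{0}) {ξ : Ordinal.{0}} (hξ : ξ < κ.ord) :
    κ.ord ∉ limPts (f '' Iio ξ) := by
  refine notMem_limPts_of_mk_lt_cof ?_
  calc #(f '' Iio ξ) ≤ #(Iio ξ) := mk_image_le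
    _ = Cardinal.lift ξ.card := mk_Iio_ordinal ξ
    _ < Cardinal.lift κ := lift_lt.2 (lt_ord.1 hξ)
    _ = Cardinal.lift κ.ord.cof := by rw [hκ.cof_ord]

lemma iSup_mem_of_forall_lt {κ : Cardinal.{0}} (hκ : κ.IsRegular)
    {f g : Ordinal.{0} → Ordinal.{0}} {β : Ordinal.{0}} (hβκ : κ.ord ≤ β)
    (hg : MapsTo g (Iio β) (Iio κ.ord)) (hfg : RightInvOn g f (Iio β))
    {x : Set Ordinal.{0}} {δ : Ordinal.{0}} (hδ : x ∩ Iio κ.ord = Iio δ) (hδcof : ℵ₀ < δ.cof)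
    (hlim : ∀ α ∈ x, α < β → limPts (f '' Iio (g α)) ⊆ x)
    {b : ℕ → Ordinal.{0}} (hb : StrictMono b) (hbx : ∀ n, b n ∈ x) (hbβ : ∀ n, b n < β) :
    ⨆ n, b n ∈ x := by
  set ξ : ℕ → Ordinal.{0} := fun n => g (b n)
  have hξ : ξ.Injective := Function.Injective.of_comp (f := f) <| by
    convert hb.injective using 1
    exact funext fun n => hfg (hbβ n)
  by_cases hfrequently : ∃ α ∈ x, α < β ∧ {n | ξ n < g α}.Infinite
  · obtain ⟨α, hαx, hαβ, hinf⟩ := hfrequently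
    exact hlim α hαx hαβ (iSup_mem_limPts hb (hinf.mono fun n hn => ⟨ξ n, hn, hfg (hbβ n)⟩))
  push Not at hfrequently
  have hcover : Iio δ ⊆ ⋃ n, f '' Iio (ξ n) := fun α hα => by
    rw [← hδ] at hα
    have hαβ : α < β := hα.2.trans_le hβκ
    obtain ⟨n, hn⟩ := exists_lt_of_finite_setOf_lt hξ _ (hfrequently α hα.1 hαβ)
    exact mem_iUnion.2 ⟨n, g α, hn, hfg hαβ⟩
  obtain ⟨n, hn⟩ := exists_mem_limPts_of_Iio_subset_iUnion hδcof hcover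
  have hδκ : δ = κ.ord := eq_of_inter_Iio_eq_Iio hδ (hlim (b n) (hbx n) (hbβ n) hn)
  exact absurd (hδκ ▸ hn) (ord_notMem_limPts_image_Iio hκ f (hg (hbβ n)))

theorem sigma_closed_general (κ : Cardinal.{0})
    (hκ : κ.IsRegular)
    (π σ : Ordinal.{0} → Ordinal.{0} → Ordinal.{0})
    (hbij : ∀ γ, κ.ord ≤ γ → γ < (Order.succ κ).ord →
      Set.BijOn (π γ) (Set.Iio κ.ord) (Set.Iio γ))
    (hinv : ∀ γ, κ.ord ≤ γ → γ < (Order.succ κ).ord → ∀ ξ < κ.ord, σ γ (π γ ξ) = ξ)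
    (x : Set Ordinal.{0}) (hx : x ⊆ Set.Iio (Order.succ κ).ord)
    (δ : Ordinal.{0}) (hδ : x ∩ Set.Iio κ.ord = Set.Iio δ)
    (hδcof : δ.cof = Cardinal.aleph 1)
    (hlim : ∀ α ∈ x, ∀ β ∈ x, α < β → κ.ord ≤ β →
      limPts (π β '' Set.Iio (σ β α)) ⊆ x) :
    ∀ b : ℕ → Ordinal.{0}, StrictMono b → (∀ n, b n ∈ x) →
      (⨆ n, b n) < sSup x → (⨆ n, b n) ∈ x := by
  intro b hb hbx hlt
  have hδcof' : ℵ₀ < δ.cof := hδcof ▸ aleph0_lt_aleph_one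
  rcases lt_or_ge (⨆ n, b n) κ.ord with hsκ | hκs
  · have hδx : Iio δ ⊆ x := hδ ▸ inter_subset_left
    refine hδx (iSup_nat_lt_of_aleph0_lt_cof hδcof' fun n => ?_)
    have hbn : b n ∈ x ∩ Iio κ.ord := ⟨hbx n, (hb.lt_iSup_nat n).trans hsκ⟩
    rwa [hδ] at hbn
  obtain ⟨β, hβx, hsβ⟩ := exists_lt_of_lt_csSup ⟨b 0, hbx 0⟩ hlt
  have hβκ : κ.ord ≤ β := hκs.trans hsβ.le
  have hπ := hbij β hβκ (hx hβx)
  have hσπ : LeftInvOn (σ β) (π β) (Iio κ.ord) := hinv β hβκ (hx hβx)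
  exact iSup_mem_of_forall_lt hκ hβκ (hσπ.mapsTo hπ.surjOn) (hπ.image_eq ▸ hσπ.rightInvOn_image)
    hδ hδcof' (fun α hαx hαβ => hlim α hαx β hβx hαβ hβκ) hb hbx
    fun n => (hb.lt_iSup_nat n).trans hsβ

/-- Let `κ` be regular uncountable, and for `κ ≤ γ < κ⁺` let `π γ : κ → γ` be a bijection
with inverse `σ γ`.  If `x ⊆ κ⁺` satisfies (i) `x ∩ κ` is an ordinal `δ` of cofinality `ω₁`,
(ii) for all `α < β` in `x` with `β ≥ κ`, `lim (π β `` (σ β α)) ⊆ x`, and (iii) `sup x` has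
cofinality `ω₁`, then `x` is `σ`-closed: the supremum of every subset of `x` of order
type `ω` lying below `sup x` belongs to `x`. -/
theorem sigma_closed (κ : Cardinal.{0})
    (hκ : κ.IsRegular) (hκu : Cardinal.aleph0 < κ)
    (π σ : Ordinal.{0} → Ordinal.{0} → Ordinal.{0})
    (hbij : ∀ γ, κ.ord ≤ γ → γ < (Order.succ κ).ord →
      Set.BijOn (π γ) (Set.Iio κ.ord) (Set.Iio γ))
    (hinv : ∀ γ, κ.ord ≤ γ → γ < (Order.succ κ).ord → ∀ ξ < κ.ord, σ γ (π γ ξ) = ξ)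
    (x : Set Ordinal.{0}) (hx : x ⊆ Set.Iio (Order.succ κ).ord)
    (δ : Ordinal.{0}) (hδ : x ∩ Set.Iio κ.ord = Set.Iio δ)
    (hδcof : δ.cof = Cardinal.aleph 1)
    (hlim : ∀ α ∈ x, ∀ β ∈ x, α < β → κ.ord ≤ β →
      limPts (π β '' Set.Iio (σ β α)) ⊆ x)
    (hsup : (sSup x).cof = Cardinal.aleph 1) :
    ∀ b : ℕ → Ordinal.{0}, StrictMono b → (∀ n, b n ∈ x) →
      (⨆ n, b n) < sSup x → (⨆ n, b n) ∈ x :=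
  sigma_closed_general κ hκ π σ hbij hinv x hx δ hδ hδcof hlim
end

section
/- Let κ be regular uncountable and λ ≥ κ. The collection of subsets of [λ]^μ containing a set of the form {⋃_{n<ω} A_n : each A_n ∈ [λ]^μ and φ(⟨A_k : k<n⟩) ⊆ A_n for all n < ω}, where φ ranges over functions ([λ]^μ)^{<ω} → [λ]^μ, forms a fine filter on [λ]^μ, for any infinite cardinal μ < λ with cf μ > ω. -/
set_option autoImplicit false

open Cardinal Set

/-- The generating set determined by `φ : ([λ]^μ)^{<ω} → [λ]^μ`: all unions
`⋃_{n<ω} A_n` where each `A_n ∈ [λ]^μ` and `φ ⟨A_k : k < n⟩ ⊆ A_n` for all `n`. -/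
def genSet (μ lam : Cardinal.{0}) (φ : List (Set Ordinal.{0}) → Set Ordinal.{0}) :
    Set (Set Ordinal.{0}) :=
  {x | ∃ A : ℕ → Set Ordinal.{0},
      (∀ n, A n ∈ slm μ lam) ∧
      (∀ n, φ ((List.range n).map A) ⊆ A n) ∧
      x = ⋃ n, A n}

/-- The collection of subsets of `[λ]^μ` containing some `genSet μ lam φ`,
`φ : ([λ]^μ)^{<ω} → [λ]^μ`. -/
def genFilter (μ lam : Cardinal.{0}) : Set (Set (Set Ordinal.{0})) :=
  {Y | Y ⊆ slm μ lam ∧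
    ∃ φ : List (Set Ordinal.{0}) → Set Ordinal.{0},
      (∀ l, φ l ∈ slm μ lam) ∧ genSet μ lam φ ⊆ Y}

/- ---------- auxiliary lemmas ---------- -/

lemma Iio_ord_mem_slm {μ lam : Cardinal.{0}} (hμ : Cardinal.aleph0 ≤ μ)
    (hμlam : μ < lam) : Set.Iio μ.ord ∈ slm μ lam := by
  refine ⟨fun x hx => lt_trans hx ((Cardinal.ord_lt_ord).2 hμlam), ?_⟩
  unfold cardEQ
  rw [Ordinal.mk_Iio_ordinal, Cardinal.card_ord]

lemma countable_union_mem_slm {μ lam : Cardinal.{0}} (hμ : Cardinal.aleph0 ≤ μ)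
    (A : ℕ → Set Ordinal.{0}) (hA : ∀ n, A n ∈ slm μ lam) :
    (⋃ n, A n) ∈ slm μ lam := by
  refine ⟨Set.iUnion_subset fun n => (hA n).1, ?_⟩
  have hrw : (⋃ n, A n) = ⋃ m : ULift.{1} ℕ, A m.down := by
    ext x; simp only [Set.mem_iUnion]
    exact ⟨fun ⟨n, hn⟩ => ⟨⟨n⟩, hn⟩, fun ⟨m, hm⟩ => ⟨m.down, hm⟩⟩
  have hle : Cardinal.mk ↥(⋃ n, A n) ≤ Cardinal.lift.{1,0} μ := by
    rw [hrw]
    refine le_trans (Cardinal.mk_iUnion_le _) ?_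
    have h1 : Cardinal.mk (ULift.{1} ℕ) = Cardinal.aleph0 := by simp
    have h2 : (⨆ m : ULift.{1} ℕ, Cardinal.mk ↥(A m.down)) = Cardinal.lift.{1,0} μ := by
      have : (fun m : ULift.{1} ℕ => Cardinal.mk ↥(A m.down)) =
          fun _ => Cardinal.lift.{1,0} μ := funext fun m => (hA m.down).2
      rw [this, ciSup_const]
    rw [h1, h2, Cardinal.aleph0_mul_eq (Cardinal.aleph0_le_lift.2 hμ)]
  have hge : Cardinal.lift.{1,0} μ ≤ Cardinal.mk ↥(⋃ n, A n) := by
    rw [← (hA 0).2]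
    exact Cardinal.mk_le_mk_of_subset (Set.subset_iUnion A 0)
  exact le_antisymm hle hge

lemma genSet_subset_slm {μ lam : Cardinal.{0}} (hμ : Cardinal.aleph0 ≤ μ)
    (φ : List (Set Ordinal.{0}) → Set Ordinal.{0}) :
    genSet μ lam φ ⊆ slm μ lam := by
  rintro x ⟨A, hA, -, rfl⟩
  exact countable_union_mem_slm hμ A hA

/-- The canonical member of `genSet μ lam φ`. -/
noncomputable def genList (φ : List (Set Ordinal.{0}) → Set Ordinal.{0}) :
    ℕ → List (Set Ordinal.{0})
  | 0 => []
  | n + 1 => genList φ n ++ [φ (genList φ n)]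

lemma genList_eq (φ : List (Set Ordinal.{0}) → Set Ordinal.{0}) (n : ℕ) :
    genList φ n = (List.range n).map (fun k => φ (genList φ k)) := by
  induction n with
  | zero => rfl
  | succ n ih =>
    rw [List.range_succ, List.map_append, genList, ih]
    simp only [List.map_cons, List.map_nil]
    rw [← ih]

lemma genSet_nonempty {μ lam : Cardinal.{0}}
    (φ : List (Set Ordinal.{0}) → Set Ordinal.{0}) (hφ : ∀ l, φ l ∈ slm μ lam) :
    (genSet μ lam φ).Nonempty := by
  refine ⟨⋃ n, φ (genList φ n), fun k => φ (genList φ k), fun n => hφ _, fun n => ?_, rfl⟩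
  rw [← genList_eq]

lemma mu_union_mem_slm {μ lam : Cardinal.{0}} (hμ : Cardinal.aleph0 ≤ μ)
    (hμlam : μ < lam) (g : Ordinal.{0} → Set Ordinal.{0})
    (hg : ∀ i ∈ Set.Iio μ.ord, g i ∈ slm μ lam) :
    (⋃ i ∈ Set.Iio μ.ord, g i) ∈ slm μ lam := by
  have hne : (0 : Ordinal) ∈ Set.Iio μ.ord := by
    simp only [Set.mem_Iio]
    exact lt_of_lt_of_le Ordinal.omega0_pos
      (by rw [← Cardinal.ord_aleph0]; exact Cardinal.ord_le_ord.2 hμ)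
  refine ⟨?_, ?_⟩
  · exact Set.iUnion₂_subset fun i hi => (hg i hi).1
  · have hrw : (⋃ i ∈ Set.Iio μ.ord, g i) = ⋃ i : ↥(Set.Iio μ.ord), g i.1 :=
      (Set.biUnion_eq_iUnion _ _)
    have hInst : Nonempty ↥(Set.Iio μ.ord) := ⟨⟨0, hne⟩⟩
    have hle : Cardinal.mk ↥(⋃ i ∈ Set.Iio μ.ord, g i) ≤ Cardinal.lift.{1,0} μ := by
      rw [hrw]
      refine le_trans (Cardinal.mk_iUnion_le _) ?_
      have h1 : Cardinal.mk ↥(Set.Iio μ.ord) = Cardinal.lift.{1,0} μ := by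
        rw [Ordinal.mk_Iio_ordinal, Cardinal.card_ord]
      have h2 : (⨆ i : ↥(Set.Iio μ.ord), Cardinal.mk ↥(g i.1)) = Cardinal.lift.{1,0} μ := by
        have : (fun i : ↥(Set.Iio μ.ord) => Cardinal.mk ↥(g i.1)) =
            fun _ => Cardinal.lift.{1,0} μ := funext fun i => (hg i.1 i.2).2
        rw [this, ciSup_const]
      rw [h1, h2, Cardinal.mul_eq_self (Cardinal.aleph0_le_lift.2 hμ)]
    have hge : Cardinal.lift.{1,0} μ ≤ Cardinal.mk ↥(⋃ i ∈ Set.Iio μ.ord, g i) := by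
      rw [← (hg 0 hne).2]
      exact Cardinal.mk_le_mk_of_subset (Set.subset_biUnion_of_mem hne)
    exact le_antisymm hle hge

/-- For `κ` regular uncountable, `λ ≥ κ`, and an infinite `μ < λ` of uncountable
cofinality, the collection of subsets of `[λ]^μ` containing a set of the form
`{⋃_{n<ω} A_n : φ(⟨A_k : k<n⟩) ⊆ A_n ∈ [λ]^μ}` is a fine filter on `[λ]^μ`. -/
theorem genFilter_isFineFilter (κ μ lam : Cardinal.{0})
    (hκ : κ.IsRegular) (hκu : Cardinal.aleph0 < κ) (hκlam : κ ≤ lam)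
    (hμ : Cardinal.aleph0 ≤ μ) (hμlam : μ < lam)
    (hcof : Cardinal.aleph0 < μ.ord.cof) :
    IsFineFilter μ lam (genFilter μ lam) := by
  classical
  have hIio : Set.Iio μ.ord ∈ slm μ lam := Iio_ord_mem_slm hμ hμlam
  have h0 : (0 : Ordinal) < μ.ord :=
    lt_of_lt_of_le Ordinal.omega0_pos
      (by rw [← Cardinal.ord_aleph0]; exact Cardinal.ord_le_ord.2 hμ)
  refine ⟨fun Y hY => hY.1, ?_, ?_, ?_, ?_, ?_⟩
  · -- slm ∈ F
    exact ⟨subset_rfl, fun _ => Set.Iio μ.ord, fun _ => hIio, genSet_subset_slm hμ _⟩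
  · -- ∅ ∉ F
    rintro ⟨-, φ, hφ, hsub⟩
    obtain ⟨x, hx⟩ := genSet_nonempty φ hφ
    exact hsub hx
  · -- upward closed
    rintro Y Z ⟨-, φ, hφ, hsub⟩ hYZ hZ
    exact ⟨hZ, φ, hφ, fun x hx => hYZ (hsub hx)⟩
  · -- μ⁺-completeness
    intro A hA
    set g : Ordinal.{0} → List (Set Ordinal.{0}) → Set Ordinal.{0} :=
      fun i => if h : i < μ.ord then (hA i h).2.choose else fun _ => Set.Iio μ.ord
      with hgdef
    have hg1 : ∀ i (h : i < μ.ord),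
        (∀ l, g i l ∈ slm μ lam) ∧ genSet μ lam (g i) ⊆ A i := by
      intro i h
      simp only [hgdef, dif_pos h]
      exact (hA i h).2.choose_spec
    set Φ : List (Set Ordinal.{0}) → Set Ordinal.{0} :=
      fun l => ⋃ i ∈ Set.Iio μ.ord, g i l with hΦdef
    have hΦ : ∀ l, Φ l ∈ slm μ lam := fun l =>
      mu_union_mem_slm hμ hμlam (fun i => g i l) (fun i hi => (hg1 i hi).1 l)
    refine ⟨?_, Φ, hΦ, ?_⟩
    · intro x hx
      exact (hA 0 h0).1 ((Set.mem_iInter₂.1 hx) 0 h0)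
    · rintro x ⟨B, hB1, hB2, rfl⟩
      rw [Set.mem_iInter₂]
      intro i hi
      refine (hg1 i hi).2 ⟨B, hB1, fun n => ?_, rfl⟩
      exact (Set.subset_biUnion_of_mem hi).trans (hB2 n)
  · -- fineness
    intro α hα
    set φ : List (Set Ordinal.{0}) → Set Ordinal.{0} :=
      fun _ => insert α (Set.Iio μ.ord) with hφdef
    have hφ : ∀ l, φ l ∈ slm μ lam := by
      intro l
      constructor
      · intro x hx
        rcases hx with rfl | hx
        · exact hα
        · exact hIio.1 hx
      · refine le_antisymm ?_ ?_
        · refine le_trans Cardinal.mk_insert_le ?_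
          rw [hIio.2, Cardinal.add_one_eq (Cardinal.aleph0_le_lift.2 hμ)]
        · rw [← hIio.2]
          exact Cardinal.mk_le_mk_of_subset (Set.subset_insert _ _)
    refine ⟨fun x hx => hx.1, φ, hφ, ?_⟩
    rintro x ⟨B, hB1, hB2, rfl⟩
    refine ⟨countable_union_mem_slm hμ B hB1, ?_⟩
    have hmem : α ∈ B 0 := hB2 0 (Set.mem_insert α _)
    exact Set.mem_iUnion.2 ⟨0, hmem⟩
end
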